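/- arXiv:0808.0227 — 7 statements merged into one kernel-verified Lean document; each statement's English description precedes it below -/
import Mathlib

section
/- Let g be an n×n matrix over a field of characteristic zero (e.g. ℂ). Then det(g) = Σ over all tuples (ℓ₁,…,ℓₙ) of nonnegative integers with Σ_{k=1}^{n} k·ℓ_k = n of ∏_{s=1}^{n} (1/ℓ_s!) · ((-1)^{s+1}/s)^{ℓ_s} · (tr(g^s))^{ℓ_s}. -/
/-!
Over `ℂ` the matrix `g` is triangularizable, so `det g = ∏ λᵢ` and `tr (g ^ s) = ∑ λᵢ ^ s` for
its eigenvalues `λᵢ`. The determinant is thus the elementary symmetric function `eₙ(λ)`, the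
coefficient of `tⁿ` in `∏ (1 + λᵢ t) = exp (∑ₛ (-1) ^ (s + 1) pₛ(λ) tˢ / s)`, and expanding the
exponential gives the sum over cycle types. Instead of manipulating power series, one checks that
both `eₘ(λ)` and the cycle-type sums satisfy Newton's recurrence
`m eₘ = ∑ⱼ (-1) ^ (j + 1) pⱼ eₘ₋ⱼ`, which determines them in characteristic zero. For the
cycle-type sums the recurrence comes from removing one cycle of length `j` from a cycle type.
-/

open Finset Module Matrix

theorem Basis.mkFinCons_repr_coe {R M : Type*} [Ring R] [AddCommGroup M] [Module R M]
    {n : ℕ} {N : Submodule R M} (y : M) (b : Basis (Fin n) R N)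
    (hli : ∀ c : R, ∀ x ∈ N, c • y + x = 0 → c = 0) (hsp : ∀ z : M, ∃ c : R, z + c • y ∈ N)
    (x : N) : ⇑((Basis.mkFinCons y b hli hsp).repr x) = Fin.cons 0 (b.repr x) := by
  have hx : (x : M) =
      ∑ i, (Fin.cons 0 (b.repr x) : Fin (n + 1) → R) i • Basis.mkFinCons y b hli hsp i := by
    simp only [Fin.sum_univ_succ, Basis.coe_mkFinCons, Fin.cons_zero, Fin.cons_succ, zero_smul,
      zero_add, Function.comp_apply]
    norm_cast
    exact (b.sum_repr x).symm
  rw [hx, Basis.repr_sum_self]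

theorem Module.End.exists_basis_isLowerTriangular_toMatrix {K V : Type*} [Field K] [IsAlgClosed K]
    [AddCommGroup V] [Module K V] [FiniteDimensional K V] (f : End K V) {n : ℕ}
    (hn : finrank K V = n) :
    ∃ b : Basis (Fin n) K V, (LinearMap.toMatrix b b f).IsLowerTriangular := by
  induction n generalizing V with
  | zero => exact ⟨finBasisOfFinrankEq K V hn, fun i => i.elim0⟩
  | succ n ih =>
    have : Nontrivial (Dual K V) := by
      apply Module.nontrivial_of_finrank_pos (R := K)
      rw [Subspace.dual_finrank_eq, hn]
      omega
    -- The kernel of an eigenvector of the transpose is an `f`-invariant hyperplane.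
    obtain ⟨μ, hμ⟩ := Module.End.exists_eigenvalue (Dual.transpose (R := K) f)
    obtain ⟨φ, hφ⟩ := hμ.exists_hasEigenvector
    have hφf (v : V) : φ (f v) = μ * φ v := LinearMap.congr_fun hφ.apply_eq_smul v
    have hH : ∀ v ∈ LinearMap.ker φ, f v ∈ LinearMap.ker φ := fun v hv => by
      rw [LinearMap.mem_ker] at hv ⊢
      rw [hφf, hv, mul_zero]
    obtain ⟨bH, hbH⟩ := ih (f.restrict hH) (by
      have := Dual.finrank_ker_add_one_of_ne_zero hφ.2
      omega)
    obtain ⟨y, hy⟩ : ∃ y, φ y ≠ 0 := by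
      by_contra! h
      exact hφ.2 (LinearMap.ext h)
    let b := Basis.mkFinCons y bH
      (fun c x hx hc => by simpa [hy, LinearMap.mem_ker.mp hx] using congrArg φ hc)
      (fun z => ⟨-(φ z / φ y), by simp [hy]⟩)
    refine ⟨b, fun i j hij => ?_⟩
    induction j using Fin.cases with
    | zero => exact absurd (OrderDual.toDual_lt_toDual.mp hij) (Fin.not_lt_zero i)
    | succ j =>
      have hfj : f (b j.succ) = (f.restrict hH (bH j) : V) := by simp [b]
      rw [LinearMap.toMatrix_apply, hfj, Basis.mkFinCons_repr_coe]
      induction i using Fin.cases with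
      | zero => rfl
      | succ i => simpa [LinearMap.toMatrix_apply] using hbH (by simpa using hij)

theorem Matrix.BlockTriangular.diag_mul {m R α : Type*} [Fintype m]
    [NonUnitalNonAssocSemiring R] [LinearOrder α] {b : m → α} (hb : Function.Injective b)
    {M N : Matrix m m R} (hM : M.BlockTriangular b) (hN : N.BlockTriangular b) :
    (M * N).diag = M.diag * N.diag := by
  ext i
  simp only [diag_apply, Pi.mul_apply, mul_apply]
  refine Finset.sum_eq_single i (fun j _ hji => ?_) (by simp)
  rcases lt_or_gt_of_ne (hb.ne hji) with h | h
  · rw [hM h, zero_mul]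
  · rw [hN h, mul_zero]

theorem Matrix.BlockTriangular.diag_pow {m R α : Type*} [Fintype m] [DecidableEq m] [Semiring R]
    [LinearOrder α] {b : m → α} (hb : Function.Injective b) {M : Matrix m m R}
    (hM : M.BlockTriangular b) (s : ℕ) : (M ^ s).diag = M.diag ^ s := by
  induction s with
  | zero => ext i; simp
  | succ s ih => rw [pow_succ, (hM.pow s).diag_mul hb hM, ih, pow_succ]

theorem Matrix.exists_det_eq_prod_trace_pow_eq_sum {K : Type*} [Field K] [IsAlgClosed K] {n : ℕ}
    (A : Matrix (Fin n) (Fin n) K) :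
    ∃ x : Fin n → K, A.det = ∏ i, x i ∧ ∀ s, (A ^ s).trace = ∑ i, x i ^ s := by
  obtain ⟨b, hT⟩ :=
    Module.End.exists_basis_isLowerTriangular_toMatrix (toLin' A) (finrank_fin_fun K)
  refine ⟨(LinearMap.toMatrix b b (toLin' A)).diag, ?_, fun s => ?_⟩
  · rw [← LinearMap.det_toLin' A, ← LinearMap.det_toMatrix b, det_of_isLowerTriangular _ hT]
    rfl
  · rw [← trace_toLin'_eq, toLin'_pow, LinearMap.trace_eq_matrix_trace K b,
      ← LinearMap.toMatrix_pow, trace, hT.diag_pow OrderDual.toDual.injective]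
    rfl

section CycleTypes

variable {K : Type*} [Field K]

/-- `ℓ k` counts the cycles of length `k + 1`. Bounding the values by `m` loses nothing and makes
the set finite. -/
def cycleTypes (N m : ℕ) : Finset (Fin N → ℕ) :=
  (univ.filter fun ℓ : Fin N → Fin (m + 1) => ∑ k : Fin N, (k.1 + 1) * (ℓ k).1 = m).map
    Fin.valEmbedding.arrowCongrRight

theorem succ_mul_le_sum (N : ℕ) (ℓ : Fin N → ℕ) (k : Fin N) :
    (k.1 + 1) * ℓ k ≤ ∑ j : Fin N, (j.1 + 1) * ℓ j :=
  Finset.single_le_sum (f := fun j : Fin N => (j.1 + 1) * ℓ j) (fun _ _ => Nat.zero_le _)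
    (Finset.mem_univ k)

theorem mem_cycleTypes {N m : ℕ} {ℓ : Fin N → ℕ} :
    ℓ ∈ cycleTypes N m ↔ ∑ k : Fin N, (k.1 + 1) * ℓ k = m := by
  constructor
  · intro hℓ
    obtain ⟨ℓ', hℓ', rfl⟩ := Finset.mem_map.mp hℓ
    simpa using hℓ'
  · intro hℓ
    have hle (k : Fin N) : ℓ k < m + 1 := by
      have := succ_mul_le_sum N ℓ k
      nlinarith
    exact Finset.mem_map.mpr ⟨fun k => ⟨ℓ k, hle k⟩, by simpa using hℓ, rfl⟩

def cycleTypeWeight {N : ℕ} (a : ℕ → K) (ℓ : Fin N → ℕ) : K :=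
  ∏ s : Fin N, a (s + 1) ^ ℓ s / (ℓ s).factorial

/-- The coefficient of `tᵐ` in `exp (∑_{j = 1}^{N} a j * tʲ)`. -/
def expCoeff (N : ℕ) (a : ℕ → K) (m : ℕ) : K :=
  ∑ ℓ ∈ cycleTypes N m, cycleTypeWeight a ℓ

theorem expCoeff_zero (N : ℕ) (a : ℕ → K) : expCoeff N a 0 = 1 := by
  have : cycleTypes N 0 = {0} := by
    ext ℓ
    simp [mem_cycleTypes, Finset.sum_eq_zero_iff, funext_iff]
  simp [expCoeff, cycleTypeWeight, this]

variable [CharZero K]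

theorem cycleTypeWeight_add_single {N : ℕ} (a : ℕ → K) (ℓ : Fin N → ℕ) (k : Fin N) :
    ((ℓ k : K) + 1) * cycleTypeWeight a (ℓ + Pi.single k 1)
      = a (k + 1) * cycleTypeWeight a ℓ := by
  have hfactor (s : Fin N) :
      a (s + 1) ^ (ℓ + Pi.single k 1 : Fin N → ℕ) s
          / ((ℓ + Pi.single k 1 : Fin N → ℕ) s).factorial
        = (Pi.mulSingle k (a (k + 1) / (ℓ k + 1)) : Fin N → K) s
          * (a (s + 1) ^ ℓ s / (ℓ s).factorial) := by
    rcases eq_or_ne s k with rfl | hs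
    · simp only [Pi.add_apply, Pi.single_eq_same, Pi.mulSingle_eq_same, Nat.factorial_succ]
      push_cast
      field_simp
      ring
    · simp [hs]
  rw [cycleTypeWeight, cycleTypeWeight, Finset.prod_congr rfl fun s _ => hfactor s,
    Finset.prod_mul_distrib, Finset.prod_pi_mulSingle', if_pos (Finset.mem_univ k)]
  field_simp

theorem sum_cycleTypes_mul_cycleTypeWeight {N : ℕ} (a : ℕ → K) (m : ℕ) (k : Fin N) :
    ∑ ℓ ∈ cycleTypes N (m + (k + 1)), (ℓ k : K) * cycleTypeWeight a ℓ
      = a (k + 1) * expCoeff N a m := by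
  let e : Fin N → ℕ := Pi.single k 1
  have hdeg (ℓ : Fin N → ℕ) :
      ∑ j : Fin N, (j.1 + 1) * (ℓ + e) j = ∑ j : Fin N, (j.1 + 1) * ℓ j + (k + 1) := by
    simp [e, mul_add, Finset.sum_add_distrib, Pi.single_apply]
  have hsub : (cycleTypes N m).image (· + e) ⊆ cycleTypes N (m + (k + 1)) := by
    rw [Finset.image_subset_iff]
    intro ℓ hℓ
    rw [mem_cycleTypes] at hℓ ⊢
    rw [hdeg, hℓ]
  rw [← Finset.sum_subset hsub, Finset.sum_image, expCoeff, Finset.mul_sum]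
  · refine Finset.sum_congr rfl fun ℓ _ => ?_
    simpa [e] using cycleTypeWeight_add_single a ℓ k
  · intro ℓ _ ℓ' _ h
    simpa using h
  · intro ℓ hℓ hnot
    suffices ℓ k = 0 by simp [this]
    by_contra hk
    have hcancel : ℓ - e + e = ℓ := by
      ext j
      rcases eq_or_ne j k with rfl | hj <;> simp [e, *]
      omega
    refine hnot (Finset.mem_image.mpr ⟨ℓ - e, ?_, hcancel⟩)
    have h := hdeg (ℓ - e)
    rw [hcancel, mem_cycleTypes.mp hℓ] at h
    rw [mem_cycleTypes]
    omega

theorem mul_expCoeff {N m : ℕ} (a : ℕ → K) (hm : m ≤ N) :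
    (m : K) * expCoeff N a m = ∑ p ∈ antidiagonal m, (p.2 : K) * a p.2 * expCoeff N a p.1 := by
  set f : ℕ → K := fun k => ((k + 1 : ℕ) : K) * a (k + 1) * expCoeff N a (m - (k + 1))
  have hk (k : Fin N) :
      ((k.1 + 1 : ℕ) : K) * ∑ ℓ ∈ cycleTypes N m, (ℓ k : K) * cycleTypeWeight a ℓ
        = if k.1 + 1 ≤ m then f k else 0 := by
    split_ifs with hkm
    · simp only [f]
      rw [mul_assoc, ← sum_cycleTypes_mul_cycleTypeWeight, Nat.sub_add_cancel hkm]
    · refine mul_eq_zero_of_right _ (Finset.sum_eq_zero fun ℓ hℓ => ?_)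
      have := succ_mul_le_sum N ℓ k
      rw [mem_cycleTypes.mp hℓ] at this
      have : ℓ k = 0 := by nlinarith
      simp [this]
  calc (m : K) * expCoeff N a m
      = ∑ k : Fin N, ((k.1 + 1 : ℕ) : K)
          * ∑ ℓ ∈ cycleTypes N m, (ℓ k : K) * cycleTypeWeight a ℓ := by
        simp_rw [Finset.mul_sum, expCoeff, Finset.mul_sum]
        rw [Finset.sum_comm]
        refine Finset.sum_congr rfl fun ℓ hℓ => ?_
        rw [← mem_cycleTypes.mp hℓ]
        push_cast
        simp only [Finset.sum_mul, mul_assoc]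
    _ = ∑ k ∈ (range N).filter (· + 1 ≤ m), f k := by
        rw [Finset.sum_filter,
          ← Fin.sum_univ_eq_sum_range (fun k => if k + 1 ≤ m then f k else 0)]
        exact Finset.sum_congr rfl fun k _ => hk k
    _ = ∑ k ∈ range m, f k := by
        congr 1
        ext k
        simp only [Finset.mem_filter, Finset.mem_range]
        omega
    _ = ∑ p ∈ antidiagonal m, (p.2 : K) * a p.2 * expCoeff N a p.1 := by
        rw [← Finset.Nat.sum_antidiagonal_swap]
        simp only [Prod.fst_swap, Prod.snd_swap]
        rw [Finset.Nat.sum_antidiagonal_eq_sum_range_succ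
          (fun i j => (i : K) * a i * expCoeff N a j), Finset.sum_range_succ']
        simp [f]

theorem eq_of_mul_eq_sum_antidiagonal {u v : ℕ → K} (b : ℕ → K) {N : ℕ} (h0 : u 0 = v 0)
    (hu : ∀ m ≤ N, (m : K) * u m = ∑ p ∈ antidiagonal m, (p.2 : K) * b p.2 * u p.1)
    (hv : ∀ m ≤ N, (m : K) * v m = ∑ p ∈ antidiagonal m, (p.2 : K) * b p.2 * v p.1) :
    ∀ m ≤ N, u m = v m := by
  intro m
  induction m using Nat.strong_induction_on with
  | _ m ih =>
    intro hmN
    rcases Nat.eq_zero_or_pos m with rfl | hm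
    · exact h0
    refine mul_left_cancel₀ (Nat.cast_ne_zero.mpr hm.ne') ?_
    rw [hu m hmN, hv m hmN]
    refine Finset.sum_congr rfl fun p hp => ?_
    rw [Finset.HasAntidiagonal.mem_antidiagonal] at hp
    rcases Nat.eq_zero_or_pos p.2 with h2 | h2
    · simp [h2]
    · rw [ih p.1 (by omega) (by omega)]

open MvPolynomial in
theorem mul_eval_esymm {σ : Type*} [Fintype σ] (x : σ → K) (m : ℕ) :
    (m : K) * eval x (esymm σ K m) = ∑ p ∈ antidiagonal m,
      (p.2 : K) * ((-1) ^ (p.2 + 1) / p.2 * eval x (psum σ K p.2)) * eval x (esymm σ K p.1) := by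
  have h := congrArg (eval x) (mul_esymm_eq_sum σ K m)
  simp only [map_mul, map_natCast, map_pow, map_neg, map_one, map_sum] at h
  rw [h, Finset.sum_filter, Finset.mul_sum]
  refine Finset.sum_congr rfl fun p hp => ?_
  rw [Finset.HasAntidiagonal.mem_antidiagonal] at hp
  split_ifs with h1
  · have h2 : (p.2 : K) ≠ 0 := Nat.cast_ne_zero.mpr (by omega)
    have hsign : (-1 : K) ^ (m + 1) * (-1) ^ p.1 = (-1) ^ (p.2 + 1) := by
      rw [← pow_add, show m + 1 + p.1 = p.2 + 1 + 2 * p.1 by omega, pow_add, pow_mul]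
      simp
    field_simp
    linear_combination (eval x (esymm σ K p.1) * eval x (psum σ K p.2)) * hsign
  · simp [show p.2 = 0 by omega]

open MvPolynomial in
theorem eval_esymm_eq_expCoeff {σ : Type*} [Fintype σ] (x : σ → K) {N m : ℕ} (hm : m ≤ N) :
    eval x (esymm σ K m) = expCoeff N (fun j => (-1) ^ (j + 1) / j * eval x (psum σ K j)) m := by
  refine eq_of_mul_eq_sum_antidiagonal (u := fun m => eval x (esymm σ K m)) _ ?_
    (fun m _ => mul_eval_esymm x m) (fun _ hm => mul_expCoeff _ hm) m hm
  simp [expCoeff_zero]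

end CycleTypes

/-- Cycle expansion of the determinant in terms of traces of powers. -/
theorem cycle_expansion_det (n : ℕ) (g : Matrix (Fin n) (Fin n) ℂ) :
    g.det =
      ∑ ℓ ∈ Finset.univ.filter
          (fun ℓ : Fin n → Fin (n + 1) => ∑ k : Fin n, (k.1 + 1) * (ℓ k).1 = n),
        ∏ s : Fin n,
          (1 / ((ℓ s).1.factorial : ℂ)) *
            ((-1 : ℂ) ^ (s.1 + 1 + 1) / ((s.1 + 1 : ℕ) : ℂ)) ^ (ℓ s).1 *
              ((g ^ (s.1 + 1)).trace) ^ (ℓ s).1 := by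
  obtain ⟨x, hdet, htrace⟩ := g.exists_det_eq_prod_trace_pow_eq_sum
  have hprod : ∏ i, x i = MvPolynomial.eval x (MvPolynomial.esymm (Fin n) ℂ n) := by
    have h := Finset.powersetCard_self (Finset.univ : Finset (Fin n))
    rw [Finset.card_univ, Fintype.card_fin] at h
    simp [MvPolynomial.esymm, h]
  have hpsum :
      (fun j : ℕ => (-1) ^ (j + 1) / (j : ℂ) * MvPolynomial.eval x (MvPolynomial.psum (Fin n) ℂ j))
        = fun j : ℕ => (-1) ^ (j + 1) / (j : ℂ) * (g ^ j).trace := by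
    simp [MvPolynomial.psum, htrace]
  rw [hdet, hprod, eval_esymm_eq_expCoeff x le_rfl, hpsum, expCoeff, cycleTypes, Finset.sum_map]
  refine Finset.sum_congr rfl fun ℓ _ => Finset.prod_congr rfl fun s _ => ?_
  simp only [Function.Embedding.arrowCongrRight_apply, Function.comp_apply, Fin.valEmbedding_apply]
  push_cast
  ring
end

section
/- Let F and φ be holomorphic on the disc {|z| < r₀} and suppose there exists r < r₀ with |φ(z)| < r whenever |z| = r. Then the Lagrange series G₀ = Σ_{n≥0} (1/n!) · (d/dε)^n (φ(ε)^n F(ε)) |_{ε=0} converges absolutely, the equation z = φ(z) has a unique solution z* in {|z| < r}, φ'(z*) ≠ 1, and G₀ = F(z*)/(1 − φ'(z*)). -/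
/-!
Put `g z = z - φ z`. By the Cauchy formula the `n`-th term of the series is
`(2πi)⁻¹ ∮ φⁿ F / zⁿ⁺¹` over `|z| = r`. On that circle `|φ| ≤ q r` for some `q < 1`, so the terms
are dominated by a geometric series, and summing the geometric series `Σ (φ/z)ⁿ` under the integral
gives `(2πi)⁻¹ ∮ F / g`. For `F = g' = 1 - φ'` the terms telescope, since `(φⁿ⁺¹)' = (n + 1) φⁿ φ'`;
hence `∮ g'/g = 2πi`. By the argument principle `g` then has exactly one zero `z*` in the disc, a
simple one, and `∮ F / g = 2πi F(z*) / g'(z*)` by the Cauchy formula for `F / (g / (z - z*))`.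
-/

open Metric Complex Filter Topology Real

theorem IsCompact.exists_lt_one_forall_norm_le_mul {X E : Type*} [TopologicalSpace X]
    [SeminormedAddCommGroup E] {K : Set X} {f : X → E} {r : ℝ} (hK : IsCompact K)
    (hKne : K.Nonempty) (hf : ContinuousOn f K) (hlt : ∀ x ∈ K, ‖f x‖ < r) :
    ∃ q, 0 ≤ q ∧ q < 1 ∧ ∀ x ∈ K, ‖f x‖ ≤ q * r := by
  obtain ⟨x₀, hx₀, hmax⟩ := hK.exists_isMaxOn hKne hf.norm
  have hr : 0 < r := (norm_nonneg _).trans_lt (hlt x₀ hx₀)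
  refine ⟨‖f x₀‖ / r, by positivity, (div_lt_one hr).mpr (hlt x₀ hx₀), fun x hx => ?_⟩
  rw [div_mul_cancel₀ _ hr.ne']
  exact hmax hx

theorem hasSum_circleIntegral_of_norm_le {E : Type*} [NormedAddCommGroup E] [NormedSpace ℂ E]
    [CompleteSpace E] {f : ℕ → ℂ → E} {g : ℂ → E} {c : ℂ} {R : ℝ} {u : ℕ → ℝ} (hR : 0 ≤ R)
    (hf : ∀ n, ContinuousOn (f n) (sphere c R)) (hfu : ∀ n, ∀ z ∈ sphere c R, ‖f n z‖ ≤ u n)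
    (hu : Summable u) (hfg : ∀ z ∈ sphere c R, HasSum (fun n => f n z) (g z)) :
    HasSum (fun n => ∮ z in C(c, R), f n z) (∮ z in C(c, R), g z) := by
  have hmem := circleMap_mem_sphere c hR
  refine intervalIntegral.hasSum_integral_of_dominated_convergence (fun n _ => R * u n)
    (fun n => ?_) (fun n => ?_) ?_ intervalIntegrable_const ?_
  · simp only [deriv_circleMap]
    exact (((continuous_circleMap 0 R).mul continuous_const).smul
      ((hf n).comp_continuous (continuous_circleMap c R) hmem)).aestronglyMeasurable
  · refine .of_forall fun θ _ => ?_
    rw [norm_smul, deriv_circleMap, norm_mul, norm_circleMap_zero, norm_I, mul_one,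
      abs_of_nonneg hR]
    exact mul_le_mul_of_nonneg_left (hfu n _ (hmem θ)) hR
  · exact .of_forall fun _ _ => hu.mul_left R
  · exact .of_forall fun θ _ => (hfg _ (hmem θ)).const_smul _

noncomputable def lagrangeCoeff (φ F : ℂ → ℂ) (n : ℕ) : ℂ :=
  1 / (n.factorial : ℂ) * iteratedDeriv n (fun ε => φ ε ^ n * F ε) 0

section LagrangeCoeff

variable {φ F G : ℂ → ℂ} {r q C : ℝ}

theorem lagrangeCoeff_eq_circleIntegral (hr : 0 < r)
    (hφ : DifferentiableOn ℂ φ (closedBall 0 r)) (hF : DifferentiableOn ℂ F (closedBall 0 r))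
    (n : ℕ) :
    lagrangeCoeff φ F n = (2 * π * I)⁻¹ * ∮ z in C(0, r), φ z ^ n * F z / z ^ (n + 1) := by
  have hd : DifferentiableOn ℂ (fun ε => φ ε ^ n * F ε) (closedBall 0 r) := (hφ.pow n).mul hF
  have h := hd.circleIntegral_one_div_sub_center_pow_smul hr n
  simp only [sub_zero, smul_eq_mul, one_div_mul_eq_div] at h
  rw [lagrangeCoeff, h]
  field_simp

theorem norm_lagrangeCoeff_le (hr : 0 < r)
    (hφ : DifferentiableOn ℂ φ (closedBall 0 r)) (hF : DifferentiableOn ℂ F (closedBall 0 r))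
    (hq : ∀ z ∈ sphere (0 : ℂ) r, ‖φ z‖ ≤ q * r) (hC : ∀ z ∈ sphere (0 : ℂ) r, ‖F z‖ ≤ C)
    (n : ℕ) : ‖lagrangeCoeff φ F n‖ ≤ C * q ^ n := by
  have hpow : ∀ z ∈ sphere (0 : ℂ) r, ‖φ z ^ n * F z‖ ≤ (q * r) ^ n * C := fun z hz => by
    rw [norm_mul, norm_pow]
    exact mul_le_mul (pow_le_pow_left₀ (norm_nonneg _) (hq z hz) n) (hC z hz) (norm_nonneg _)
      (pow_nonneg ((norm_nonneg _).trans (hq z hz)) n)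
  have hd : DifferentiableOn ℂ (fun ε => φ ε ^ n * F ε) (closedBall 0 r) := (hφ.pow n).mul hF
  have h := norm_iteratedDeriv_le_of_forall_mem_sphere_norm_le n hr
    (hd.mono closure_ball_subset_closedBall).diffContOnCl hpow
  rw [lagrangeCoeff, norm_mul, norm_div, norm_one, Complex.norm_natCast]
  calc 1 / (n.factorial : ℝ) * ‖iteratedDeriv n (fun ε => φ ε ^ n * F ε) 0‖
      ≤ 1 / n.factorial * (n.factorial * ((q * r) ^ n * C) / r ^ n) := by gcongr
    _ = C * q ^ n := by field_simp; ring

theorem summable_norm_lagrangeCoeff (hr : 0 < r)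
    (hφ : DifferentiableOn ℂ φ (closedBall 0 r)) (hF : DifferentiableOn ℂ F (closedBall 0 r))
    (hq : ∀ z ∈ sphere (0 : ℂ) r, ‖φ z‖ ≤ q * r) (hq0 : 0 ≤ q) (hq1 : q < 1) :
    Summable fun n => ‖lagrangeCoeff φ F n‖ := by
  obtain ⟨C, hC⟩ := (isCompact_sphere (0 : ℂ) r).exists_bound_of_continuousOn
    (hF.continuousOn.mono sphere_subset_closedBall)
  exact .of_nonneg_of_le (fun n => norm_nonneg _) (norm_lagrangeCoeff_le hr hφ hF hq hC)
    ((summable_geometric_of_lt_one hq0 hq1).mul_left C)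

theorem hasSum_lagrangeCoeff (hr : 0 < r)
    (hφ : DifferentiableOn ℂ φ (closedBall 0 r)) (hF : DifferentiableOn ℂ F (closedBall 0 r))
    (hq : ∀ z ∈ sphere (0 : ℂ) r, ‖φ z‖ ≤ q * r) (hq0 : 0 ≤ q) (hq1 : q < 1) :
    HasSum (lagrangeCoeff φ F) ((2 * π * I)⁻¹ * ∮ z in C(0, r), F z / (z - φ z)) := by
  have hφc := hφ.continuousOn.mono sphere_subset_closedBall
  have hFc := hF.continuousOn.mono sphere_subset_closedBall
  obtain ⟨C, hC⟩ := (isCompact_sphere (0 : ℂ) r).exists_bound_of_continuousOn hFc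
  have hz0 : ∀ z ∈ sphere (0 : ℂ) r, z ≠ 0 := fun z hz => ne_zero_of_mem_sphere hr.ne' ⟨z, hz⟩
  rw [funext (lagrangeCoeff_eq_circleIntegral hr hφ hF)]
  refine .mul_left _ (hasSum_circleIntegral_of_norm_le hr.le (u := fun n => C * q ^ n / r)
    (fun n => ((hφc.pow n).mul hFc).div (continuousOn_pow _)
      fun z hz => pow_ne_zero _ (hz0 z hz)) (fun n z hz => ?_)
    (((summable_geometric_of_lt_one hq0 hq1).mul_left C).div_const r) (fun z hz => ?_))
  · rw [norm_div, norm_mul, norm_pow, norm_pow, mem_sphere_zero_iff_norm.mp hz]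
    calc ‖φ z‖ ^ n * ‖F z‖ / r ^ (n + 1) ≤ (q * r) ^ n * C / r ^ (n + 1) := by
          gcongr
          exacts [hq z hz, hC z hz]
      _ = C * q ^ n / r := by field_simp; ring
  · have hlt : ‖φ z / z‖ < 1 := by
      rw [norm_div, mem_sphere_zero_iff_norm.mp hz, div_lt_one hr]
      exact (hq z hz).trans_lt (by nlinarith)
    have hterm : ∀ n : ℕ, (φ z / z) ^ n * (F z / z) = φ z ^ n * F z / z ^ (n + 1) := fun n => by
      rw [div_pow, pow_succ]
      field_simp [hz0 z hz]
    have hsum : (1 - φ z / z)⁻¹ * (F z / z) = F z / (z - φ z) := by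
      field_simp [hz0 z hz]
    simpa only [hterm, hsum] using (hasSum_geometric_of_norm_lt_one hlt).mul_right (F z / z)

theorem lagrangeCoeff_sub (hφ : AnalyticAt ℂ φ 0) (hF : AnalyticAt ℂ F 0)
    (hG : AnalyticAt ℂ G 0) (n : ℕ) :
    lagrangeCoeff φ (F - G) n = lagrangeCoeff φ F n - lagrangeCoeff φ G n := by
  have hsplit : (fun ε => φ ε ^ n * (F - G) ε) = fun ε => φ ε ^ n * F ε - φ ε ^ n * G ε := by
    funext ε; simp only [Pi.sub_apply]; ring
  have hφF : AnalyticAt ℂ (fun ε => φ ε ^ n * F ε) 0 := (hφ.pow n).mul hF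
  have hφG : AnalyticAt ℂ (fun ε => φ ε ^ n * G ε) 0 := (hφ.pow n).mul hG
  rw [lagrangeCoeff, lagrangeCoeff, lagrangeCoeff, hsplit,
    iteratedDeriv_fun_sub hφF.contDiffAt hφG.contDiffAt, mul_sub]

theorem lagrangeCoeff_deriv (hφ : AnalyticAt ℂ φ 0) (n : ℕ) :
    lagrangeCoeff φ (deriv φ) n = lagrangeCoeff φ 1 (n + 1) := by
  have hderiv : deriv (fun ε => φ ε ^ (n + 1) * (1 : ℂ → ℂ) ε)
      =ᶠ[𝓝 0] fun ε => ((n : ℂ) + 1) * (φ ε ^ n * deriv φ ε) := by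
    filter_upwards [hφ.eventually_analyticAt] with z hz
    simp only [Pi.one_apply, mul_one]
    rw [deriv_fun_pow hz.differentiableAt]
    push_cast; ring
  rw [lagrangeCoeff, lagrangeCoeff, iteratedDeriv_succ', hderiv.iteratedDeriv_eq,
    iteratedDeriv_const_mul_field, Nat.factorial_succ]
  push_cast
  field_simp

theorem circleIntegral_one_sub_deriv_div_sub_self (hr : 0 < r)
    (hφ : AnalyticOnNhd ℂ φ (closedBall 0 r)) (hq : ∀ z ∈ sphere (0 : ℂ) r, ‖φ z‖ ≤ q * r)
    (hq0 : 0 ≤ q) (hq1 : q < 1) :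
    ∮ z in C(0, r), (1 - deriv φ z) / (z - φ z) = 2 * π * I := by
  have hφ0 : AnalyticAt ℂ φ 0 := hφ 0 (mem_closedBall_self hr.le)
  have hφ' : AnalyticOnNhd ℂ (deriv φ) (closedBall 0 r) := hφ.deriv
  have hsum := hasSum_lagrangeCoeff (F := 1 - deriv φ) hr hφ.differentiableOn
    ((differentiableOn_const 1).sub hφ'.differentiableOn) hq hq0 hq1
  have htel : ∀ n, lagrangeCoeff φ (1 - deriv φ) n
      = lagrangeCoeff φ 1 n - lagrangeCoeff φ 1 (n + 1) := fun n => by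
    rw [lagrangeCoeff_sub (F := 1) hφ0 analyticAt_const (hφ' 0 (mem_closedBall_self hr.le)),
      lagrangeCoeff_deriv hφ0]
  have hvanish : Tendsto (lagrangeCoeff φ 1) atTop (𝓝 0) :=
    squeeze_zero_norm (fun n => (norm_lagrangeCoeff_le hr hφ.differentiableOn
      (differentiableOn_const 1) hq (C := 1) (fun _ _ => by simp) n).trans_eq (one_mul _))
      (tendsto_pow_atTop_nhds_zero_of_lt_one hq0 hq1)
  have hpartial : Tendsto (fun N => ∑ n ∈ Finset.range N, lagrangeCoeff φ (1 - deriv φ) n)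
      atTop (𝓝 1) := by
    simp_rw [htel, Finset.sum_range_sub']
    simpa [lagrangeCoeff] using hvanish.const_sub (lagrangeCoeff φ 1 0)
  have h := tendsto_nhds_unique hsum.tendsto_sum_nat hpartial
  simp only [Pi.sub_apply, Pi.one_apply] at h
  exact ((inv_mul_eq_one₀ two_pi_I_ne_zero).mp h).symm

end LagrangeCoeff

section ArgumentPrinciple

variable {g F : ℂ → ℂ} {c w : ℂ} {R R₀ : ℝ}

theorem eq_sub_mul_dslope (hgw : g w = 0) (z : ℂ) : g z = (z - w) * dslope g w z := by
  simpa [hgw] using (sub_smul_dslope g w z).symm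

theorem analyticOrderAt_ne_top_of_forall_mem_sphere_ne_zero (hR : 0 ≤ R) (hRR : R < R₀)
    (hg : AnalyticOnNhd ℂ g (ball c R₀)) (hsp : ∀ z ∈ sphere c R, g z ≠ 0) {u : ℂ}
    (hu : u ∈ ball c R₀) : analyticOrderAt g u ≠ ⊤ := by
  have hx : c + R ∈ sphere c R := by simp [abs_of_nonneg hR]
  refine hg.analyticOrderAt_ne_top_of_isPreconnected isPreconnected_ball
    (sphere_subset_ball hRR hx) hu ?_
  rw [(hg _ (sphere_subset_ball hRR hx)).analyticOrderAt_eq_zero.mpr (hsp _ hx)]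
  exact ENat.zero_ne_top

theorem analyticOrderNatAt_ne_zero_iff_of_forall_mem_sphere_ne_zero (hR : 0 ≤ R) (hRR : R < R₀)
    (hg : AnalyticOnNhd ℂ g (ball c R₀)) (hsp : ∀ z ∈ sphere c R, g z ≠ 0) {u : ℂ}
    (hu : u ∈ ball c R₀) : analyticOrderNatAt g u ≠ 0 ↔ g u = 0 := by
  rw [← (hg u hu).analyticOrderAt_ne_zero, ← Nat.cast_analyticOrderNatAt
    (analyticOrderAt_ne_top_of_forall_mem_sphere_ne_zero hR hRR hg hsp hu), Nat.cast_ne_zero]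

theorem analyticOrderNatAt_eq_add_analyticOrderNatAt_dslope (hw0 : g w = 0) {u : ℂ}
    (hg₁ : AnalyticAt ℂ (dslope g w) u) (hfin : analyticOrderAt (dslope g w) u ≠ ⊤) :
    analyticOrderNatAt g u = analyticOrderNatAt (· - w) u + analyticOrderNatAt (dslope g w) u := by
  calc analyticOrderNatAt g u = analyticOrderNatAt ((· - w) * dslope g w) u := by
        congr 1; exact funext (eq_sub_mul_dslope hw0)
    _ = _ := analyticOrderNatAt_mul (by fun_prop) hg₁ (by by_cases h : u = w <;> simp [h]) hfin

theorem circleIntegral_logDeriv_eq_add_dslope (hR : 0 < R) (hRR : R < R₀)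
    (hg₁ : DifferentiableOn ℂ (dslope g w) (ball c R₀))
    (hsp₁ : ∀ z ∈ sphere c R, dslope g w z ≠ 0) (hw : w ∈ ball c R) (hw0 : g w = 0) :
    ∮ z in C(c, R), logDeriv g z = 2 * π * I + ∮ z in C(c, R), logDeriv (dslope g w) z := by
  have hg₁an := hg₁.analyticOnNhd isOpen_ball
  have hlog : Set.EqOn (logDeriv g) (fun z => (z - w)⁻¹ + logDeriv (dslope g w) z)
      (sphere c R) := by
    intro z hz
    have hzw : z - w ≠ 0 := sub_ne_zero.mpr (sphere_disjoint_ball.ne_of_mem hz hw)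
    conv_lhs => rw [funext (eq_sub_mul_dslope hw0)]
    rw [logDeriv_mul z hzw (hsp₁ z hz) (by fun_prop)
      (hg₁an z (sphere_subset_ball hRR hz)).differentiableAt]
    simp [logDeriv_apply]
  have hint : CircleIntegrable (logDeriv (dslope g w)) c R :=
    ((hg₁an.deriv.continuousOn.mono (sphere_subset_ball hRR)).div
      (hg₁.continuousOn.mono (sphere_subset_ball hRR)) hsp₁).circleIntegrable hR.le
  rw [circleIntegral.integral_congr hR.le hlog, circleIntegral.integral_add
    (circleIntegrable_sub_inv_iff.mpr
      (.inr fun h => sphere_disjoint_ball.ne_of_mem (abs_of_pos hR ▸ h) hw rfl)) hint,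
    circleIntegral.integral_sub_inv_of_mem_ball hw]

theorem circleIntegral_logDeriv_eq_sum_analyticOrderNatAt (hR : 0 < R) (hRR : R < R₀)
    (hg : DifferentiableOn ℂ g (ball c R₀)) (hsp : ∀ z ∈ sphere c R, g z ≠ 0)
    {s : Finset ℂ} (hzeros : ∀ z ∈ ball c R, g z = 0 → z ∈ s) (hs : ↑s ⊆ ball c R) :
    ∮ z in C(c, R), logDeriv g z = 2 * π * I * ∑ u ∈ s, analyticOrderNatAt g u := by
  generalize hn : ∑ u ∈ s, analyticOrderNatAt g u = n
  have hcb : closedBall c R ⊆ ball c R₀ := closedBall_subset_ball hRR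
  induction n generalizing g with
  | zero =>
    have hgan := hg.analyticOnNhd isOpen_ball
    have hne : ∀ z ∈ closedBall c R, g z ≠ 0 := by
      intro z hz hgz
      rcases (mem_closedBall.mp hz).lt_or_eq with hlt | heq
      · have hzs := hzeros z (mem_ball.mpr hlt) hgz
        exact (analyticOrderNatAt_ne_zero_iff_of_forall_mem_sphere_ne_zero hR.le hRR hgan hsp
          (hcb hz)).mpr hgz (Finset.sum_eq_zero_iff.mp hn z hzs)
      · exact hsp z (mem_sphere.mpr heq) hgz
    have hd : DifferentiableOn ℂ (logDeriv g) (closedBall c R) :=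
      (hgan.deriv.differentiableOn.mono hcb).div (hg.mono hcb) hne
    rw [(hd.mono closure_ball_subset_closedBall).diffContOnCl.circleIntegral_eq_zero hR.le]
    simp
  | succ n ih =>
    have hgan := hg.analyticOnNhd isOpen_ball
    obtain ⟨w, hws, hw0⟩ : ∃ w ∈ s, g w = 0 := by
      obtain ⟨w, hws, hw⟩ := Finset.exists_ne_zero_of_sum_ne_zero (hn.trans_ne n.succ_ne_zero)
      exact ⟨w, hws, (analyticOrderNatAt_ne_zero_iff_of_forall_mem_sphere_ne_zero hR.le hRR hgan
        hsp (hcb (ball_subset_closedBall (hs hws)))).mp hw⟩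
    have hwR₀ : w ∈ ball c R₀ := hcb (ball_subset_closedBall (hs hws))
    have hg₁ : DifferentiableOn ℂ (dslope g w) (ball c R₀) :=
      (differentiableOn_dslope (isOpen_ball.mem_nhds hwR₀)).mpr hg
    have hg₁an := hg₁.analyticOnNhd isOpen_ball
    have hsp₁ : ∀ z ∈ sphere c R, dslope g w z ≠ 0 := fun z hz h =>
      hsp z hz (by rw [eq_sub_mul_dslope hw0 z, h, mul_zero])
    have hzeros₁ : ∀ z ∈ ball c R, dslope g w z = 0 → z ∈ s := fun z hz h =>
      hzeros z hz (by rw [eq_sub_mul_dslope hw0 z, h, mul_zero])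
    have hlinear : ∑ u ∈ s, analyticOrderNatAt (· - w) u = 1 := by
      rw [Finset.sum_eq_single_of_mem w hws fun u _ hu => by simp [analyticOrderNatAt, hu]]
      simp [analyticOrderNatAt]
    have hsum₁ : ∑ u ∈ s, analyticOrderNatAt (dslope g w) u = n := by
      have hsR₀ : ∀ u ∈ s, u ∈ ball c R₀ := fun u hu => hcb (ball_subset_closedBall (hs hu))
      rw [Finset.sum_congr rfl fun u hu => analyticOrderNatAt_eq_add_analyticOrderNatAt_dslope hw0
        (hg₁an u (hsR₀ u hu)) (analyticOrderAt_ne_top_of_forall_mem_sphere_ne_zero hR.le hRR hg₁an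
          hsp₁ (hsR₀ u hu)), Finset.sum_add_distrib, hlinear] at hn
      omega
    rw [circleIntegral_logDeriv_eq_add_dslope hR hRR hg₁ hsp₁ (hs hws) hw0,
      ih hg₁ hsp₁ hzeros₁ hsum₁]
    push_cast
    ring

theorem circleIntegral_div_eq_of_unique_simple_zero (hRR : R < R₀)
    (hF : DifferentiableOn ℂ F (ball c R₀)) (hg : DifferentiableOn ℂ g (ball c R₀))
    (hw : w ∈ ball c R) (hzeros : ∀ z ∈ closedBall c R, g z = 0 ↔ z = w)
    (hg' : deriv g w ≠ 0) :
    ∮ z in C(c, R), F z / g z = 2 * π * I * (F w / deriv g w) := by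
  have hcb : closedBall c R ⊆ ball c R₀ := closedBall_subset_ball hRR
  have hw0 : g w = 0 := (hzeros w (ball_subset_closedBall hw)).mpr rfl
  have hfac : ∀ z, g z = (z - w) * dslope g w z := eq_sub_mul_dslope hw0
  have hg₁ : DifferentiableOn ℂ (dslope g w) (ball c R₀) :=
    (differentiableOn_dslope (isOpen_ball.mem_nhds (hcb (ball_subset_closedBall hw)))).mpr hg
  have hne : ∀ z ∈ closedBall c R, dslope g w z ≠ 0 := by
    intro z hz h
    obtain rfl := (hzeros z hz).mp (by rw [hfac z, h, mul_zero])
    exact hg' (dslope_same g z ▸ h)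
  have hd : DifferentiableOn ℂ (fun z => F z / dslope g w z) (closedBall c R) :=
    (hF.mono hcb).div (hg₁.mono hcb) hne
  have hcongr : Set.EqOn (fun z => F z / g z) (fun z => (z - w)⁻¹ • (F z / dslope g w z))
      (sphere c R) := by
    intro z hz
    have hzw : z - w ≠ 0 := sub_ne_zero.mpr (sphere_disjoint_ball.ne_of_mem hz hw)
    simp only [hfac z, smul_eq_mul]
    field_simp
  rw [circleIntegral.integral_congr (dist_nonneg.trans (mem_ball.mp hw).le) hcongr,
    hd.circleIntegral_sub_inv_smul hw, dslope_same, smul_eq_mul]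

theorem finite_setOf_mem_ball_eq_zero (hRR : R < R₀) (hg : AnalyticOnNhd ℂ g (ball c R₀))
    {x : ℂ} (hx : x ∈ ball c R₀) (hgx : g x ≠ 0) : {z | z ∈ ball c R ∧ g z = 0}.Finite := by
  have hcod := codiscreteWithin_mono (closedBall_subset_ball hRR)
    (hg.preimage_zero_mem_codiscreteWithin hgx hx (isConnected_ball (dist_nonneg.trans_lt hx)))
  refine ((isCompact_closedBall c R).finite_sdiff_of_mem_codiscreteWithin hcod).subset ?_
  exact fun z hz => ⟨ball_subset_closedBall hz.1, fun h => h hz.2⟩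

theorem exists_unique_simple_zero_of_circleIntegral_logDeriv_eq (hR : 0 < R) (hRR : R < R₀)
    (hg : DifferentiableOn ℂ g (ball c R₀)) (hsp : ∀ z ∈ sphere c R, g z ≠ 0)
    (hwind : ∮ z in C(c, R), logDeriv g z = 2 * π * I) :
    ∃ w ∈ ball c R, (∀ z ∈ closedBall c R, g z = 0 ↔ z = w) ∧ deriv g w ≠ 0 := by
  have hgan := hg.analyticOnNhd isOpen_ball
  have hcb : closedBall c R ⊆ ball c R₀ := closedBall_subset_ball hRR
  have hx : c + R ∈ sphere c R := by simp [abs_of_nonneg hR.le]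
  have hfin := finite_setOf_mem_ball_eq_zero hRR hgan (sphere_subset_ball hRR hx) (hsp _ hx)
  set s := hfin.toFinset
  have hmem : ∀ z, z ∈ s ↔ z ∈ ball c R ∧ g z = 0 := fun z => hfin.mem_toFinset
  have hord : ∀ u ∈ s, analyticOrderNatAt g u ≠ 0 := fun u hu =>
    (analyticOrderNatAt_ne_zero_iff_of_forall_mem_sphere_ne_zero hR.le hRR hgan hsp
      (hcb (ball_subset_closedBall ((hmem u).mp hu).1))).mpr ((hmem u).mp hu).2
  have hsum : ∑ u ∈ s, analyticOrderNatAt g u = 1 := by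
    rw [circleIntegral_logDeriv_eq_sum_analyticOrderNatAt hR hRR hg hsp
      (fun z hz h => (hmem z).mpr ⟨hz, h⟩) (fun z hz => ((hmem z).mp hz).1)] at hwind
    exact_mod_cast mul_right_eq_self₀.mp hwind |>.resolve_right two_pi_I_ne_zero
  obtain ⟨w, hws⟩ : s.Nonempty := Finset.nonempty_of_sum_ne_zero (hsum ▸ one_ne_zero)
  have hcard : s.card ≤ 1 := by
    simpa [hsum] using s.card_nsmul_le_sum _ 1 fun u hu => Nat.one_le_iff_ne_zero.mpr (hord u hu)
  have hs : s = {w} := Finset.eq_singleton_iff_unique_mem.mpr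
    ⟨hws, fun u hu => Finset.card_le_one.mp hcard u hu w hws⟩
  obtain ⟨hwb, hw0⟩ := (hmem w).mp hws
  have hwR₀ : w ∈ ball c R₀ := hcb (ball_subset_closedBall hwb)
  refine ⟨w, hwb, fun z hz => ⟨fun h => ?_, fun h => h ▸ hw0⟩, fun h' => ?_⟩
  · rcases (mem_closedBall.mp hz).lt_or_eq with hlt | heq
    · exact Finset.mem_singleton.mp (hs ▸ (hmem z).mpr ⟨mem_ball.mpr hlt, h⟩)
    · exact absurd h (hsp z (mem_sphere.mpr heq))
  · rw [hs, Finset.sum_singleton] at hsum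
    have htwo : ((2 : ℕ) : ℕ∞) ≤ analyticOrderAt g w :=
      (natCast_le_analyticOrderAt_iff_iteratedDeriv_eq_zero (hgan w hwR₀)).mpr fun i hi => by
        interval_cases i <;> simpa
    rw [← Nat.cast_analyticOrderNatAt (analyticOrderAt_ne_top_of_forall_mem_sphere_ne_zero hR.le
      hRR hgan hsp hwR₀), hsum] at htwo
    exact absurd htwo (by norm_num)

end ArgumentPrinciple

/-- The scalar Lagrange series: absolute convergence and its sum
`F(z*) / (1 - φ'(z*))` at the unique fixed point `z*` of `φ` in the disc. -/
theorem lagrange_series_scalar (r₀ r : ℝ) (hr : 0 < r) (hrr : r < r₀)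
    (F φ : ℂ → ℂ)
    (hF : DifferentiableOn ℂ F (Metric.ball (0 : ℂ) r₀))
    (hφ : DifferentiableOn ℂ φ (Metric.ball (0 : ℂ) r₀))
    (hb : ∀ z : ℂ, ‖z‖ = r → ‖φ z‖ < r) :
    (Summable fun n : ℕ =>
      ‖(1 / (n.factorial : ℂ)) * iteratedDeriv n (fun ε => φ ε ^ n * F ε) 0‖) ∧
    ∃ z : ℂ, ‖z‖ < r ∧ z = φ z ∧
      (∀ w : ℂ, ‖w‖ < r → w = φ w → w = z) ∧
      deriv φ z ≠ 1 ∧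
      (∑' n : ℕ, (1 / (n.factorial : ℂ)) * iteratedDeriv n (fun ε => φ ε ^ n * F ε) 0)
        = F z / (1 - deriv φ z) := by
  have hcb : closedBall (0 : ℂ) r ⊆ ball 0 r₀ := closedBall_subset_ball hrr
  have hb' : ∀ z ∈ sphere (0 : ℂ) r, ‖φ z‖ < r := fun z hz => hb z (mem_sphere_zero_iff_norm.mp hz)
  obtain ⟨q, hq0, hq1, hq⟩ := (isCompact_sphere (0 : ℂ) r).exists_lt_one_forall_norm_le_mul
    (NormedSpace.sphere_nonempty.mpr hr.le) (hφ.continuousOn.mono (sphere_subset_ball hrr)) hb'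
  have hφan := hφ.analyticOnNhd isOpen_ball
  have hg : DifferentiableOn ℂ (fun z => z - φ z) (ball 0 r₀) := differentiableOn_id.sub hφ
  have hg' : ∀ z ∈ ball (0 : ℂ) r₀, deriv (fun z => z - φ z) z = 1 - deriv φ z := fun z hz => by
    rw [deriv_fun_sub differentiableAt_fun_id (hφan z hz).differentiableAt, deriv_id'']
  have hsp : ∀ z ∈ sphere (0 : ℂ) r, z - φ z ≠ 0 := fun z hz h =>
    (hb' z hz).ne (sub_eq_zero.mp h ▸ mem_sphere_zero_iff_norm.mp hz)
  have hwind : ∮ z in C(0, r), logDeriv (fun z => z - φ z) z = 2 * π * I := by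
    rw [← circleIntegral_one_sub_deriv_div_sub_self hr (hφan.mono hcb) hq hq0 hq1]
    exact circleIntegral.integral_congr hr.le fun z hz => by
      rw [logDeriv_apply, hg' z (sphere_subset_ball hrr hz)]
  obtain ⟨w, hw, hzeros, hgw⟩ :=
    exists_unique_simple_zero_of_circleIntegral_logDeriv_eq hr hrr hg hsp hwind
  have hres := circleIntegral_div_eq_of_unique_simple_zero hrr hF hg hw hzeros hgw
  rw [hg' w (ball_subset_ball hrr.le hw)] at hgw hres
  refine ⟨summable_norm_lagrangeCoeff hr (hφ.mono hcb) (hF.mono hcb) hq hq0 hq1, w,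
    mem_ball_zero_iff.mp hw, sub_eq_zero.mp ((hzeros w (ball_subset_closedBall hw)).mpr rfl),
    fun v hv hfix => (hzeros v (mem_closedBall_zero_iff.mpr hv.le)).mp (sub_eq_zero.mpr hfix),
    fun h => hgw (by rw [h, sub_self]), ?_⟩
  change ∑' n, lagrangeCoeff φ F n = _
  rw [(hasSum_lagrangeCoeff hr (hφ.mono hcb) (hF.mono hcb) hq hq0 hq1).tsum_eq, hres,
    ← mul_assoc, inv_mul_cancel₀ two_pi_I_ne_zero, one_mul]
end

section
/- Hyperbolic Cauchy determinant: for complex numbers x₁,…,x_N and y₁,…,y_N with sinh(x_j − y_k) ≠ 0 for all j,k and the x's pairwise distinct mod iπ and the y's pairwise distinct mod iπ, det_N [1/sinh(x_j − y_k)] = ∏_{j<k} sinh(x_j − x_k)·sinh(y_k − y_j) / ∏_{j,k} sinh(x_j − y_k). -/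
/-!
Put `a j = exp (2 x j) / 2` and `b k = exp (2 y k) / 2`. Then
`sinh (z - w) = (exp (2z)/2 - exp (2w)/2) * exp (-z) * exp (-w)`, so the hyperbolic matrix is the
rational Cauchy matrix `1 / (a j - b k)` with its rows and columns rescaled, and the rescaling
factors on the two sides of the identity agree.

For the Cauchy determinant let `P k = ∏_{l ≠ k} (X - b l)` and let `M` be the matrix of their
coefficients. Evaluating at the nodes `a` gives `V(a) M = [∏_{l ≠ k} (a j - b l)]`, the Cauchy
matrix with row `j` scaled by `∏_l (a j - b l)`; evaluating at the nodes `b` makes `V(b) M`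
diagonal, whence `det M = ∏_{j < k} (b j - b k)` when the `b`s are distinct. When two `b`s
coincide, both sides vanish.
-/

open Matrix Finset

section CauchyDeterminant

open Polynomial Lagrange

variable {K : Type*} [Field K] {n : ℕ}

theorem Fin.prod_prod_erase_eq_prod_prod_Ioi {M : Type*} [CommMonoid M]
    (f : Fin n → Fin n → M) :
    ∏ k, ∏ l ∈ univ.erase k, f k l = ∏ j, ∏ k ∈ Ioi j, f j k * f k j := by
  have hsplit (k : Fin n) : univ.erase k = Iio k ∪ Ioi k := by
    ext l
    simp [lt_or_lt_iff_ne]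
  have hdisj (k : Fin n) : Disjoint (Iio k) (Ioi k) :=
    disjoint_left.2 fun l hl hl' => lt_asymm (mem_Iio.1 hl) (mem_Ioi.1 hl')
  simp only [hsplit, prod_union (hdisj _), prod_mul_distrib]
  rw [mul_comm]
  congr 1
  exact prod_comm' (by simp)

theorem Fin.prod_prod_Ioi_mul_mul_prod_eq_pow {M : Type*} [CommMonoid M] (w : Fin n → M) :
    (∏ j, ∏ k ∈ Ioi j, w j * w k) * ∏ j, w j = (∏ j, w j) ^ n := by
  rw [← Fin.prod_prod_erase_eq_prod_prod_Ioi fun k _ => w k, ← prod_mul_distrib,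
    prod_congr rfl fun k _ => prod_erase_mul univ (fun _ => w k) (mem_univ k)]
  simp [prod_pow]

theorem Matrix.eval_matrixOfPolynomials_eq_vandermonde_mul_matrixOfPolynomials_of_natDegree_lt
    {R : Type*} [CommRing R] (v : Fin n → R) (p : Fin n → R[X])
    (h_deg : ∀ j, (p j).natDegree < n) :
    of (fun i j : Fin n => (p j).eval (v i)) =
      vandermonde v * of (fun i j : Fin n => (p j).coeff i) := by
  ext i j
  rw [of_apply, eval_eq_sum_range' (h_deg j), ← Fin.sum_univ_eq_sum_range (fun m => _ * v i ^ m),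
    mul_apply]
  exact sum_congr rfl fun m _ => by simp [vandermonde_apply, mul_comm]

noncomputable def Matrix.nodalCoeffMatrix {R : Type*} [CommRing R] (b : Fin n → R) :
    Matrix (Fin n) (Fin n) R :=
  of fun i k => (nodal (univ.erase k) b).coeff i

theorem Matrix.det_vandermonde_mul_det_nodalCoeffMatrix (a b : Fin n → K) :
    det (vandermonde a) * det (nodalCoeffMatrix b) =
      det (of fun j k => ∏ l ∈ univ.erase k, (a j - b l)) := by
  have h_deg (k : Fin n) : (nodal (univ.erase k) b).natDegree < n := by
    rw [natDegree_nodal]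
    simpa using card_erase_lt_of_mem (mem_univ k)
  rw [← det_mul, nodalCoeffMatrix,
    ← eval_matrixOfPolynomials_eq_vandermonde_mul_matrixOfPolynomials_of_natDegree_lt _ _ h_deg]
  simp only [eval_nodal]

theorem Matrix.det_nodalCoeffMatrix {b : Fin n → K} (hb : Function.Injective b) :
    det (nodalCoeffMatrix b) = ∏ j, ∏ k ∈ Ioi j, (b j - b k) := by
  have hV : det (vandermonde b) ≠ 0 := det_vandermonde_ne_zero_iff.2 hb
  refine mul_left_cancel₀ hV ?_
  have h_diag : (of fun j k => ∏ l ∈ univ.erase k, (b j - b l)) =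
      diagonal fun k => ∏ l ∈ univ.erase k, (b k - b l) := by
    ext j k
    rcases eq_or_ne j k with rfl | hjk
    · simp
    · rw [diagonal_apply_ne _ hjk, of_apply]
      exact prod_eq_zero (mem_erase.2 ⟨hjk, mem_univ j⟩) (sub_self _)
  rw [det_vandermonde_mul_det_nodalCoeffMatrix, h_diag, det_diagonal,
    Fin.prod_prod_erase_eq_prod_prod_Ioi, det_vandermonde]
  simp only [prod_mul_distrib]
  ring

theorem Matrix.det_cauchy {a b : Fin n → K} (hab : ∀ j k, a j ≠ b k) :
    det (of fun j k => 1 / (a j - b k)) =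
      (∏ j, ∏ k ∈ Ioi j, (a j - a k) * (b k - b j)) / ∏ j, ∏ k, (a j - b k) := by
  have hR : ∏ j, ∏ k, (a j - b k) ≠ 0 :=
    prod_ne_zero_iff.2 fun j _ => prod_ne_zero_iff.2 fun k _ => sub_ne_zero.2 (hab j k)
  rw [eq_div_iff hR, mul_comm]
  by_cases hb : Function.Injective b
  · have h_scale : (of fun j k => ∏ l ∈ univ.erase k, (a j - b l)) =
        of fun j k => (∏ l, (a j - b l)) * of (fun j k => 1 / (a j - b k)) j k := by
      ext j k
      rw [of_apply, of_apply, of_apply, ← mul_prod_erase univ _ (mem_univ k)]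
      field_simp [sub_ne_zero.2 (hab j k)]
    calc (∏ j, ∏ k, (a j - b k)) * det (of fun j k => 1 / (a j - b k))
        = det (of fun j k => ∏ l ∈ univ.erase k, (a j - b l)) := by rw [h_scale, det_mul_column]
      _ = det (vandermonde a) * det (nodalCoeffMatrix b) :=
        (det_vandermonde_mul_det_nodalCoeffMatrix a b).symm
      _ = ∏ j, ∏ k ∈ Ioi j, (a j - a k) * (b k - b j) := by
        rw [det_nodalCoeffMatrix hb, det_vandermonde, ← prod_mul_distrib]
        refine prod_congr rfl fun j _ => ?_
        rw [← prod_mul_distrib]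
        exact prod_congr rfl fun k _ => by ring
  · obtain ⟨k, l, hbkl, hkl⟩ : ∃ k l, b k = b l ∧ k ≠ l := by
      simpa [Function.Injective, not_forall] using hb
    wlog hlt : k < l generalizing k l
    · exact this l k hbkl.symm hkl.symm (hkl.lt_or_gt.resolve_left hlt)
    rw [det_zero_of_column_eq hkl (by simp [hbkl]), mul_zero, eq_comm]
    exact prod_eq_zero (mem_univ k) (prod_eq_zero (mem_Ioi.2 hlt) (by simp [hbkl]))

theorem Matrix.det_scaled_cauchy {a b p q : Fin n → K} (hab : ∀ j k, a j ≠ b k)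
    (hp : ∀ j, p j ≠ 0) (hq : ∀ k, q k ≠ 0) :
    det (of fun j k => 1 / ((a j - b k) * (p j * q k))) =
      (∏ j, ∏ k ∈ Ioi j, ((a j - a k) * (p j * p k)) * ((b k - b j) * (q k * q j))) /
        ∏ j, ∏ k, ((a j - b k) * (p j * q k)) := by
  set w : Fin n → K := fun j => p j * q j
  have h_lhs : (of fun j k => 1 / ((a j - b k) * (p j * q k))) =
      of fun j k => (p j)⁻¹ *
        of (fun j k => (q k)⁻¹ * of (fun j k => 1 / (a j - b k)) j k) j k := by
    ext j k
    simp only [of_apply]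
    field_simp
  have h_num : ∏ j, ∏ k ∈ Ioi j, ((a j - a k) * (p j * p k)) * ((b k - b j) * (q k * q j)) =
      (∏ j, ∏ k ∈ Ioi j, (a j - a k) * (b k - b j)) * ∏ j, ∏ k ∈ Ioi j, w j * w k := by
    simp only [w, prod_mul_distrib]
    ring
  have h_den : ∏ j, ∏ k, ((a j - b k) * (p j * q k)) =
      (∏ j, ∏ k, (a j - b k)) * ((∏ j, ∏ k ∈ Ioi j, w j * w k) * ∏ j, w j) := by
    rw [Fin.prod_prod_Ioi_mul_mul_prod_eq_pow]
    simp only [w, prod_mul_distrib, prod_const, card_univ, Fintype.card_fin, mul_pow, prod_pow]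
  have hS : ∏ j, ∏ k ∈ Ioi j, w j * w k ≠ 0 :=
    prod_ne_zero_iff.2 fun j _ => prod_ne_zero_iff.2 fun k _ =>
      mul_ne_zero (mul_ne_zero (hp j) (hq j)) (mul_ne_zero (hp k) (hq k))
  have h_scale : (∏ j, (p j)⁻¹) * (∏ k, (q k)⁻¹) = (∏ j, w j)⁻¹ := by
    simp only [w, prod_mul_distrib, mul_inv, prod_inv_distrib]
  rw [h_lhs, det_mul_column, det_mul_row, det_cauchy hab, h_num, h_den, ← mul_assoc, h_scale]
  field_simp

end CauchyDeterminant

theorem Complex.sinh_sub_eq_mul (z w : ℂ) :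
    Complex.sinh (z - w) =
      (Complex.exp (2 * z) / 2 - Complex.exp (2 * w) / 2) *
        (Complex.exp (-z) * Complex.exp (-w)) := by
  have h2 (u : ℂ) : Complex.exp (2 * u) = Complex.exp u * Complex.exp u := by
    rw [two_mul, Complex.exp_add]
  rw [Complex.sinh, neg_sub, Complex.exp_sub, Complex.exp_sub, Complex.exp_neg, Complex.exp_neg,
    h2, h2]
  field_simp

theorem hyperbolic_cauchy_det_general (N : ℕ) (x y : Fin N → ℂ)
    (hxy : ∀ j k, Complex.sinh (x j - y k) ≠ 0) :
    Matrix.det (Matrix.of fun j k : Fin N => 1 / Complex.sinh (x j - y k)) =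
      (∏ j : Fin N, ∏ k ∈ Finset.Ioi j,
          Complex.sinh (x j - x k) * Complex.sinh (y k - y j)) /
        ∏ j : Fin N, ∏ k : Fin N, Complex.sinh (x j - y k) := by
  simp_rw [Complex.sinh_sub_eq_mul] at hxy ⊢
  exact Matrix.det_scaled_cauchy (fun j k h => hxy j k (by rw [h, sub_self, zero_mul]))
    (fun j => Complex.exp_ne_zero _) (fun k => Complex.exp_ne_zero _)

/-- Hyperbolic Cauchy determinant. -/
theorem hyperbolic_cauchy_det (N : ℕ) (x y : Fin N → ℂ)
    (hxy : ∀ j k, Complex.sinh (x j - y k) ≠ 0)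
    (hx : ∀ j k, j ≠ k → Complex.sinh (x j - x k) ≠ 0)
    (hy : ∀ j k, j ≠ k → Complex.sinh (y j - y k) ≠ 0) :
    Matrix.det (Matrix.of fun j k : Fin N => 1 / Complex.sinh (x j - y k)) =
      (∏ j : Fin N, ∏ k ∈ Finset.Ioi j,
          Complex.sinh (x j - x k) * Complex.sinh (y k - y j)) /
        ∏ j : Fin N, ∏ k : Fin N, Complex.sinh (x j - y k) :=
  hyperbolic_cauchy_det_general N x y hxy
end

section
/- Let λ₁,…,λ_N and z₁,…,z_N be complex numbers with all relevant sinh-factors nonzero, and define the N×N matrix A by A_{jk} = [∏_{a=1}^N sinh(z_j − λ_a) / ∏_{a≠j} sinh(z_j − z_a)] · coth(z_j − λ_k) for k < N, and A_{jN} = ∏_{a=1}^N sinh(z_j − λ_a) / ∏_{a≠j} sinh(z_j − z_a). Then det_N A = [∏_{a=1}^N sinh(z_a − λ_N) / ∏_{a=1}^{N-1} sinh(λ_a − λ_N)] · ∏_{a>b} sinh(λ_a − λ_b)/sinh(z_a − z_b). -/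
/-!
Let `M` be the matrix `coth (z j - lam k)` with its last column replaced by ones, so that `A` is `M`
with its rows rescaled. Subtracting the last row of `M` from the others and using
`coth a - coth b = sinh (b - a) / (sinh a * sinh b)` reduces `det M` to the hyperbolic Cauchy
determinant `det (1 / sinh (z j - lam k))` of one size less. Conversely, rescaling row `j` of the
Cauchy matrix by `sinh (z j - lam N)` and using
`sinh b / sinh a = cosh (b - a) + sinh (b - a) coth a`, a column operation turns it into a matrix
of the shape of `M`. Alternating the two reductions
evaluates both determinants by induction, and the theorem is then bookkeeping of products.
-/

open Matrix Finset Complex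

section Products

variable {M : Type*} [CommMonoid M]

theorem Finset.prod_prod_erase_eq_prod_prod_Iio {ι : Type*} [Fintype ι] [LinearOrder ι]
    [LocallyFiniteOrderBot ι] [LocallyFiniteOrderTop ι] (f : ι → ι → M) :
    ∏ j, ∏ a ∈ univ.erase j, f j a = ∏ a, ∏ b ∈ Iio a, f a b * f b a := by
  have hsplit : ∀ j,
      ∏ a ∈ univ.erase j, f j a = (∏ a ∈ Iio j, f j a) * ∏ a ∈ Ioi j, f j a := by
    intro j
    rw [← prod_union (disjoint_left.2 fun a ha ha' => (mem_Iio.1 ha).asymm (mem_Ioi.1 ha'))]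
    congr 1
    ext a
    simp
  have hswap : ∏ j, ∏ a ∈ Ioi j, f j a = ∏ a, ∏ b ∈ Iio a, f b a :=
    prod_comm' fun j a => by simp
  simp only [hsplit, prod_mul_distrib, hswap]

theorem Fin.prod_prod_Iio_castSucc {n : ℕ} (f : Fin (n + 1) → Fin (n + 1) → M) :
    ∏ a, ∏ b ∈ Iio a, f a b =
      (∏ a : Fin n, ∏ b ∈ Iio a, f a.castSucc b.castSucc) *
        ∏ b : Fin n, f (last n) b.castSucc := by
  rw [Fin.prod_univ_castSucc, Fin.Iio_last_eq_map, prod_map]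
  simp only [Fin.prod_Iio_castSucc, Fin.coe_castSuccEmb]

theorem Fin.prod_univ_erase_last {n : ℕ} (g : Fin (n + 1) → M) :
    ∏ a ∈ univ.erase (last n), g a = ∏ b : Fin n, g b.castSucc := by
  rw [← compl_singleton, ← Fin.image_castSucc,
    prod_image fun a _ b _ h => Fin.castSucc_injective n h]

end Products

namespace Matrix

variable {R : Type*} [CommRing R]

theorem det_eq_of_forall_col_eq_smul_add_const {ι : Type*} [Fintype ι] [DecidableEq ι]
    {A B : Matrix ι ι R} (c : ι → R) (k : ι) (hk : c k = 0)
    (A_eq : ∀ i j, A i j = B i j + c j * B i k) : det A = det B := by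
  rw [← det_transpose A, ← det_transpose B]
  exact det_eq_of_forall_row_eq_smul_add_const c k hk fun i j => A_eq j i

theorem det_succ_column_last_of_eq_zero {n : ℕ} (A : Matrix (Fin (n + 1)) (Fin (n + 1)) R)
    (h : ∀ i : Fin n, A i.castSucc (Fin.last n) = 0) :
    det A = A (Fin.last n) (Fin.last n) * det (A.submatrix Fin.castSucc Fin.castSucc) := by
  rw [det_succ_column A (Fin.last n), Fin.sum_univ_castSucc,
    sum_eq_zero fun i _ => by rw [h i, mul_zero, zero_mul], zero_add, Fin.succAbove_last]
  simp [← two_mul, pow_mul]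

end Matrix

namespace Complex

theorem cosh_div_sinh_sub_cosh_div_sinh {a b : ℂ} (ha : sinh a ≠ 0) (hb : sinh b ≠ 0) :
    cosh a / sinh a - cosh b / sinh b = sinh (b - a) / (sinh a * sinh b) := by
  rw [sinh_sub]
  field_simp

theorem sinh_div_sinh_eq {a b : ℂ} (ha : sinh a ≠ 0) :
    sinh b / sinh a = cosh (b - a) + sinh (b - a) * (cosh a / sinh a) := by
  conv_lhs => rw [show b = a + (b - a) by ring, sinh_add]
  field_simp

end Complex

noncomputable def cothOnesMatrix {n : ℕ} (z lam : Fin (n + 1) → ℂ) :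
    Matrix (Fin (n + 1)) (Fin (n + 1)) ℂ :=
  of fun j k => if k = Fin.last n then 1 else cosh (z j - lam k) / sinh (z j - lam k)

theorem det_cothOnesMatrix_eq {n : ℕ} (z lam : Fin (n + 1) → ℂ)
    (h : ∀ j k, k ≠ Fin.last n → sinh (z j - lam k) ≠ 0) :
    det (cothOnesMatrix z lam) =
      (∏ i : Fin n, sinh (z (Fin.last n) - z i.castSucc)) /
          (∏ k : Fin n, sinh (z (Fin.last n) - lam k.castSucc)) *
        det (of fun i k : Fin n => (sinh (z i.castSucc - lam k.castSucc))⁻¹) := by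
  let B : Matrix (Fin (n + 1)) (Fin (n + 1)) ℂ := of fun j k =>
    if j = Fin.last n then cothOnesMatrix z lam j k
    else if k = Fin.last n then 0
    else sinh (z (Fin.last n) - z j) / (sinh (z j - lam k) * sinh (z (Fin.last n) - lam k))
  have hrow : det (cothOnesMatrix z lam) = det B := by
    refine det_eq_of_forall_row_eq_smul_add_const (fun j => if j = Fin.last n then 0 else 1)
      (Fin.last n) (by simp) fun j k => ?_
    by_cases hj : j = Fin.last n
    · simp [hj, B]
    by_cases hk : k = Fin.last n
    · simp [hj, hk, B, cothOnesMatrix]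
    have hz : z (Fin.last n) - z j = (z (Fin.last n) - lam k) - (z j - lam k) := by ring
    simp only [cothOnesMatrix, B, of_apply, hj, hk, if_false, if_true, one_mul, hz,
      ← cosh_div_sinh_sub_cosh_div_sinh (h j k hk) (h _ k hk)]
    ring
  have hsub : det (B.submatrix Fin.castSucc Fin.castSucc) =
      (∏ i : Fin n, sinh (z (Fin.last n) - z i.castSucc)) *
        ((∏ k : Fin n, (sinh (z (Fin.last n) - lam k.castSucc))⁻¹) *
          det (of fun i k : Fin n => (sinh (z i.castSucc - lam k.castSucc))⁻¹)) := by
    rw [← det_mul_row, ← det_mul_column]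
    congr 1
    ext i k
    simp [B, Fin.castSucc_ne_last, div_eq_mul_inv, mul_comm]
  rw [hrow, det_succ_column_last_of_eq_zero B fun i => by simp [B, Fin.castSucc_ne_last], hsub,
    prod_inv_distrib]
  simp [B, cothOnesMatrix, div_eq_mul_inv, mul_assoc]

theorem det_inv_sinh_eq {n : ℕ} (z lam : Fin (n + 1) → ℂ)
    (h : ∀ j k, sinh (z j - lam k) ≠ 0) :
    det (of fun j k => (sinh (z j - lam k))⁻¹) =
      (∏ k : Fin n, sinh (lam k.castSucc - lam (Fin.last n))) /
          (∏ j, sinh (z j - lam (Fin.last n))) * det (cothOnesMatrix z lam) := by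
  have hscale : det (of fun j k => (sinh (z j - lam k))⁻¹) =
      (∏ j, (sinh (z j - lam (Fin.last n)))⁻¹) *
        det (of fun j k => sinh (z j - lam (Fin.last n)) / sinh (z j - lam k)) := by
    rw [← det_mul_column]
    congr 1
    ext j k
    simp [div_eq_mul_inv, h j (Fin.last n)]
  have hcol : det (of fun j k => sinh (z j - lam (Fin.last n)) / sinh (z j - lam k)) =
      (∏ k, if k = Fin.last n then 1 else sinh (lam k - lam (Fin.last n))) *
        det (cothOnesMatrix z lam) := by
    rw [← det_mul_row]
    refine det_eq_of_forall_col_eq_smul_add_const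
      (fun k => if k = Fin.last n then 0 else cosh (lam k - lam (Fin.last n))) (Fin.last n)
      (by simp) fun j k => ?_
    by_cases hk : k = Fin.last n
    · simp [hk, cothOnesMatrix, div_self (h j _)]
    have hd : z j - lam (Fin.last n) - (z j - lam k) = lam k - lam (Fin.last n) := by ring
    simp [hk, cothOnesMatrix, sinh_div_sinh_eq (h j k), hd, add_comm]
  rw [hscale, hcol, ← mul_assoc, prod_inv_distrib, Fin.prod_univ_castSucc
    fun k => if k = Fin.last n then 1 else sinh (lam k - lam (Fin.last n))]
  simp only [Fin.castSucc_ne_last, if_false, if_true, mul_one, div_eq_inv_mul]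

theorem det_inv_sinh_sub (m : ℕ) (z lam : Fin m → ℂ) (h : ∀ j k, sinh (z j - lam k) ≠ 0) :
    det (of fun j k => (sinh (z j - lam k))⁻¹) =
      (∏ a, ∏ b ∈ Iio a, sinh (z a - z b)) * (∏ a, ∏ b ∈ Iio a, sinh (lam b - lam a)) /
        ∏ j, ∏ k, sinh (z j - lam k) := by
  induction m with
  | zero => simp
  | succ n ih =>
    rw [det_inv_sinh_eq z lam h, det_cothOnesMatrix_eq z lam fun j k _ => h j k,
      ih _ _ fun i k => h _ _, Fin.prod_prod_Iio_castSucc fun a b => sinh (z a - z b),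
      Fin.prod_prod_Iio_castSucc fun a b => sinh (lam b - lam a)]
    simp only [Fin.prod_univ_castSucc, prod_mul_distrib]
    field_simp (disch := simp [prod_ne_zero_iff, h])

theorem det_cothOnesMatrix {n : ℕ} (z lam : Fin (n + 1) → ℂ)
    (h : ∀ j k, k ≠ Fin.last n → sinh (z j - lam k) ≠ 0) :
    det (cothOnesMatrix z lam) =
      (∏ a, ∏ b ∈ Iio a, sinh (z a - z b)) *
          (∏ a : Fin n, ∏ b ∈ Iio a, sinh (lam b.castSucc - lam a.castSucc)) /
        ∏ j, ∏ k : Fin n, sinh (z j - lam k.castSucc) := by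
  have h' : ∀ j (k : Fin n), sinh (z j - lam k.castSucc) ≠ 0 :=
    fun j k => h j _ (Fin.castSucc_ne_last k)
  rw [det_cothOnesMatrix_eq z lam h, det_inv_sinh_sub n _ _ fun i k => h' _ k,
    Fin.prod_prod_Iio_castSucc fun a b => sinh (z a - z b),
    Fin.prod_univ_castSucc fun j => ∏ k : Fin n, sinh (z j - lam k.castSucc)]
  field_simp (disch := simp [prod_ne_zero_iff, h'])

/-- Determinant of the auxiliary matrix `A` from the proof of the
Cauchy-extraction proposition. -/
theorem det_aux_matrix_A (n : ℕ) (lam z : Fin (n + 1) → ℂ)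
    (hlam : ∀ a b, a ≠ b → Complex.sinh (lam a - lam b) ≠ 0)
    (hz : ∀ a b, a ≠ b → Complex.sinh (z a - z b) ≠ 0)
    (hzlam : ∀ j k, Complex.sinh (z j - lam k) ≠ 0) :
    Matrix.det (Matrix.of fun j k : Fin (n + 1) =>
      ((∏ a, Complex.sinh (z j - lam a)) /
          ∏ a ∈ Finset.univ.erase j, Complex.sinh (z j - z a)) *
        (if k = Fin.last n then 1
          else Complex.cosh (z j - lam k) / Complex.sinh (z j - lam k))) =
      ((∏ a, Complex.sinh (z a - lam (Fin.last n))) /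
          ∏ a ∈ Finset.univ.erase (Fin.last n),
            Complex.sinh (lam a - lam (Fin.last n))) *
        ∏ a : Fin (n + 1), ∏ b ∈ Finset.Iio a,
          (Complex.sinh (lam a - lam b) / Complex.sinh (z a - z b)) := by
  have hodd : ∏ a, ∏ b ∈ Iio a, sinh (lam a - lam b) / sinh (z a - z b) =
      ∏ a, ∏ b ∈ Iio a, sinh (lam b - lam a) / sinh (z b - z a) :=
    prod_congr rfl fun a _ => prod_congr rfl fun b _ => by
      rw [← neg_sub (lam b), ← neg_sub (z b), sinh_neg, sinh_neg, neg_div_neg_eq]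
  refine (det_mul_column _ (cothOnesMatrix z lam)).trans ?_
  rw [det_cothOnesMatrix z lam fun j k _ => hzlam j k, prod_div_distrib,
    prod_prod_erase_eq_prod_prod_Iio, Fin.prod_univ_erase_last, hodd]
  simp only [prod_div_distrib, prod_mul_distrib]
  rw [Fin.prod_prod_Iio_castSucc fun a b => sinh (lam b - lam a)]
  simp only [Fin.prod_univ_castSucc (fun k => sinh (_ - lam k)), prod_mul_distrib]
  have hW : ∏ j, ∏ k : Fin n, sinh (z j - lam k.castSucc) ≠ 0 :=
    prod_ne_zero_iff.2 fun j _ => prod_ne_zero_iff.2 fun k _ => hzlam _ _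
  have hZ : ∏ a, ∏ b ∈ Iio a, sinh (z a - z b) ≠ 0 :=
    prod_ne_zero_iff.2 fun a _ => prod_ne_zero_iff.2 fun b hb => hz a b (mem_Iio.1 hb).ne'
  have hΛ : ∏ b : Fin n, sinh (lam b.castSucc - lam (Fin.last n)) ≠ 0 :=
    prod_ne_zero_iff.2 fun b _ => hlam _ _ (Fin.castSucc_ne_last b)
  field_simp
end

section
/- Reduction property of h_N at Bethe roots: let a, d : ℂ → ℂ, κ ∈ ℂ, ζ ∈ (0,π), and let λ₁,…,λ_N satisfy the Bethe equation at λ_s: a(λ_s)·∏_{k=1}^{N} sinh(λ_k − λ_s − iζ) + d(λ_s)·∏_{k=1}^{N} sinh(λ_k − λ_s + iζ) = 0, with d(λ_s) ≠ 0 and all involved sinh-factors for k ≠ s nonzero. Let z₁,…,z_N be complex numbers and define V_±(μ) = ∏_a sinh(μ−λ_a±iζ)/sinh(μ−z_a±iζ) and h_N(z_k) = [κ − V₋(z_k)/V₊(z_k)] / [κ + (−1)^N (a(z_k)/d(z_k)) ∏_a sinh(z_a − z_k − iζ)/sinh(z_k − z_a − iζ)]. Then, for any k, substituting z_k = λ_s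 yields h_N = 1, provided the denominator is nonzero. -/
/-!
At `z_k = λ_s`, reversing the sinh-arguments turns the numerators of `V₋(z_k)` and `V₊(z_k)` into
`(-1)^N` times the Bethe products `∏ sinh (λ_t - λ_s ± iζ)`, and the product in the denominator of
`h_N` into `(-1)^N ∏ sinh (z_k - z_t + iζ)`. The signs cancel, and the Bethe equation
`a/d = -∏ sinh (λ_t - λ_s + iζ) / ∏ sinh (λ_t - λ_s - iζ)` makes numerator and denominator of
`h_N` coincide.
-/

open Complex Finset

theorem Complex.prod_sinh_of_forall_eq_neg {ι : Type*} [Fintype ι] {u v : ι → ℂ}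
    (h : ∀ t, u t = -v t) :
    ∏ t, sinh (u t) = (-1) ^ Fintype.card ι * ∏ t, sinh (v t) := by
  simp only [h, sinh_neg, prod_neg, card_univ]

theorem div_eq_neg_div_of_mul_add_mul_eq_zero {K : Type*} [Field K] {a d p q : K}
    (h : a * q + d * p = 0) (hd : d ≠ 0) (hq : q ≠ 0) : a / d = -(p / q) := by
  field_simp
  linear_combination h

theorem sub_div_div_eq_add_mul_of_bethe {K : Type*} [Field K] {κ a d p q u v σ : K}
    (hσ : σ * σ = 1) (hBethe : a * q + d * p = 0) (hd : d ≠ 0) (hq : q ≠ 0) :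
    κ - σ * p / v / (σ * q / u) = κ + σ * (a / d) * (σ * u / v) := by
  have hσ0 : σ ≠ 0 := left_ne_zero_of_mul_eq_one hσ
  rw [div_eq_neg_div_of_mul_add_mul_eq_zero hBethe hd hq, mul_div_assoc σ p,
    mul_div_assoc σ q, mul_div_mul_left _ _ hσ0, div_div_div_eq]
  linear_combination (p / q * (u / v)) * hσ

theorem hN_reduction_at_bethe_root_general (N : ℕ) (a d : ℂ → ℂ) (κ : ℂ)
    (ζ : ℝ)
    (lam : Fin N → ℂ) (s : Fin N)
    (hBethe : a (lam s) * (∏ t, Complex.sinh (lam t - lam s - Complex.I * ζ)) +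
        d (lam s) * (∏ t, Complex.sinh (lam t - lam s + Complex.I * ζ)) = 0)
    (hd : d (lam s) ≠ 0)
    (z : Fin N → ℂ) (k : Fin N) (hzk : z k = lam s)
    (hBm : (∏ t, Complex.sinh (lam t - lam s - Complex.I * ζ)) ≠ 0)
    (hden : κ + (-1 : ℂ) ^ N * (a (z k) / d (z k)) *
        (∏ t, Complex.sinh (z t - z k - Complex.I * ζ) /
          Complex.sinh (z k - z t - Complex.I * ζ)) ≠ 0) :
    (κ -
        (∏ t, Complex.sinh (z k - lam t - Complex.I * ζ) /
            Complex.sinh (z k - z t - Complex.I * ζ)) /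
          (∏ t, Complex.sinh (z k - lam t + Complex.I * ζ) /
            Complex.sinh (z k - z t + Complex.I * ζ))) /
      (κ + (-1 : ℂ) ^ N * (a (z k) / d (z k)) *
        (∏ t, Complex.sinh (z t - z k - Complex.I * ζ) /
          Complex.sinh (z k - z t - Complex.I * ζ))) = 1 := by
  have hlam_m : ∏ t, sinh (z k - lam t - I * ζ) =
      (-1) ^ Fintype.card (Fin N) * ∏ t, sinh (lam t - lam s + I * ζ) :=
    prod_sinh_of_forall_eq_neg fun t => by rw [hzk]; ring
  have hlam_p : ∏ t, sinh (z k - lam t + I * ζ) =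
      (-1) ^ Fintype.card (Fin N) * ∏ t, sinh (lam t - lam s - I * ζ) :=
    prod_sinh_of_forall_eq_neg fun t => by rw [hzk]; ring
  have hz_m : ∏ t, sinh (z t - z k - I * ζ) =
      (-1) ^ Fintype.card (Fin N) * ∏ t, sinh (z k - z t + I * ζ) :=
    prod_sinh_of_forall_eq_neg fun t => by ring
  have hσ : (-1 : ℂ) ^ N * (-1) ^ N = 1 := by rw [← mul_pow]; norm_num
  refine (div_eq_one_iff_eq hden).mpr ?_
  rw [prod_div_distrib, prod_div_distrib, prod_div_distrib, hlam_m, hlam_p, hz_m, hzk,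
    Fintype.card_fin]
  exact sub_div_div_eq_add_mul_of_bethe hσ hBethe hd hBm

/-- Reduction property of `h_N` at a Bethe root: substituting `z_k = λ_s`
yields `h_N = 1`. -/
theorem hN_reduction_at_bethe_root (N : ℕ) (a d : ℂ → ℂ) (κ : ℂ)
    (ζ : ℝ) (hζ : 0 < ζ ∧ ζ < Real.pi)
    (lam : Fin N → ℂ) (s : Fin N)
    (hBethe : a (lam s) * (∏ t, Complex.sinh (lam t - lam s - Complex.I * ζ)) +
        d (lam s) * (∏ t, Complex.sinh (lam t - lam s + Complex.I * ζ)) = 0)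
    (hd : d (lam s) ≠ 0)
    (z : Fin N → ℂ) (k : Fin N) (hzk : z k = lam s)
    (hBp : (∏ t, Complex.sinh (lam t - lam s + Complex.I * ζ)) ≠ 0)
    (hBm : (∏ t, Complex.sinh (lam t - lam s - Complex.I * ζ)) ≠ 0)
    (hzp : ∀ t, Complex.sinh (z k - z t + Complex.I * ζ) ≠ 0)
    (hzm : ∀ t, Complex.sinh (z k - z t - Complex.I * ζ) ≠ 0)
    (hlp : ∀ t, Complex.sinh (z k - lam t + Complex.I * ζ) ≠ 0)
    (hden : κ + (-1 : ℂ) ^ N * (a (z k) / d (z k)) *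
        (∏ t, Complex.sinh (z t - z k - Complex.I * ζ) /
          Complex.sinh (z k - z t - Complex.I * ζ)) ≠ 0) :
    (κ -
        (∏ t, Complex.sinh (z k - lam t - Complex.I * ζ) /
            Complex.sinh (z k - z t - Complex.I * ζ)) /
          (∏ t, Complex.sinh (z k - lam t + Complex.I * ζ) /
            Complex.sinh (z k - z t + Complex.I * ζ))) /
      (κ + (-1 : ℂ) ^ N * (a (z k) / d (z k)) *
        (∏ t, Complex.sinh (z t - z k - Complex.I * ζ) /
          Complex.sinh (z k - z t - Complex.I * ζ))) = 1 :=
  hN_reduction_at_bethe_root_general N a d κ ζ lam s hBethe hd z k hzk hBm hden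
end

section
/- θ-independence of the normalized determinant: let λ₁,…,λ_N, z₁,…,z_N be generic complex numbers, κ ∈ ℂ, ζ ∈ (0,π), V_±(μ) = ∏_a sinh(μ−λ_a±iζ)/sinh(μ−z_a±iζ), K_κ(λ) = coth(λ+iζ) − κ·coth(λ−iζ), and for a parameter θ define the N×N matrix U(θ)_{jk} = [∏_a sinh(z_a−λ_j)/∏_{a≠j} sinh(λ_a−λ_j)] · [K_κ(λ_j−λ_k) − K_κ(θ−λ_k)] / [V₊(λ_j)^{-1} − κ·V₋(λ_j)^{-1}]. Then the quantity det_N[δ_{jk} + U(θ)_{jk}] / (V₊(θ)^{-1} − κ·V₋(θ)^{-1}) is independent of θ; in particular det_N[δ_{jk}+U(θ)_{jk}] = [(V₊(θ)^{-1} − κV₋(θ)^{-1})/(V₊(θ')^{-1} − κV₋(θ')^{-1})] · det_N[δ_{jk}+U(θ')_{jk}] for any two admissible θ, θ'. -/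
open Matrix Finset


open Finset Polynomial

lemma pf_key (N : ℕ) (α β : Fin N → ℂ) (hα : Function.Injective α)
    (T : ℂ) (hT : ∀ a, T - α a ≠ 0) :
    (∏ a, (T - β a)) / (∏ a, (T - α a)) =
      1 + ∑ k, ((∏ a, (α k - β a)) / (∏ a ∈ Finset.univ.erase k, (α k - α a))) / (T - α k) := by
  classical
  set c : Fin N → ℂ := fun k => (∏ a, (α k - β a)) / (∏ a ∈ Finset.univ.erase k, (α k - α a))
    with hc
  have hprodα : (∏ a, (T - α a)) ≠ 0 := prod_ne_zero_iff.mpr fun a _ => hT a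
  have hden : ∀ k : Fin N, (∏ a ∈ Finset.univ.erase k, (α k - α a)) ≠ 0 := by
    intro k
    refine prod_ne_zero_iff.mpr fun a ha => sub_ne_zero.mpr ?_
    exact fun h => (Finset.mem_erase.mp ha).1 (hα h.symm) |>.elim
  -- polynomial identity
  have key : (∏ a, (T - β a)) =
      (∏ a, (T - α a)) + ∑ k, c k * ∏ a ∈ Finset.univ.erase k, (T - α a) := by
    have hp : (∏ a, (X - C (β a))) - (∏ a, (X - C (α a))) -
        ∑ k, C (c k) * ∏ a ∈ Finset.univ.erase k, (X - C (α a)) = 0 := by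
      rcases Nat.eq_zero_or_pos N with hN | hN
      · subst hN; simp
      set p : ℂ[X] := (∏ a, (X - C (β a))) - (∏ a, (X - C (α a))) -
        ∑ k, C (c k) * ∏ a ∈ Finset.univ.erase k, (X - C (α a)) with hpdef
      have heval : ∀ j, p.eval (α j) = 0 := by
        intro j
        have h1 : (∏ a, (α j - α a)) = 0 :=
          prod_eq_zero (mem_univ j) (sub_self _)
        have h2 : ∀ k, k ≠ j → c k * ∏ a ∈ Finset.univ.erase k, (α j - α a) = 0 := by
          intro k hk
          have : (∏ a ∈ Finset.univ.erase k, (α j - α a)) = 0 :=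
            prod_eq_zero (Finset.mem_erase.mpr ⟨hk.symm, mem_univ j⟩) (sub_self _)
          rw [this, mul_zero]
        have h3 : c j * ∏ a ∈ Finset.univ.erase j, (α j - α a) = ∏ a, (α j - β a) :=
          div_mul_cancel₀ _ (hden j)
        simp only [hpdef, eval_sub, eval_prod, eval_finset_sum, eval_mul, eval_C, eval_X]
        rw [h1, Finset.sum_eq_single j (fun k _ hk => h2 k hk) (by simp), h3]
        ring
      have hcard : p.natDegree < N := by
        rcases eq_or_ne p 0 with h0 | h0
        · simpa [h0] using hN
        have hmon : ∀ (γ : Fin N → ℂ), (∏ a, (X - C (γ a))).Monic :=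
          fun γ => monic_prod_of_monic _ _ fun a _ => monic_X_sub_C _
        have hdeg : ∀ (γ : Fin N → ℂ), (∏ a, (X - C (γ a))).natDegree = N := by
          intro γ
          rw [natDegree_prod_of_monic _ _ fun a _ => monic_X_sub_C _]
          simp
        have hAB : ((∏ a, (X - C (β a))) - (∏ a, (X - C (α a)))).natDegree < N := by
          rcases eq_or_ne ((∏ a, (X - C (β a))) - (∏ a, (X - C (α a)))) 0 with h | h
          · simpa [h] using hN
          rw [natDegree_lt_iff_degree_lt h]
          have hd : (∏ a, (X - C (β a))).degree = (∏ a, (X - C (α a))).degree := by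
            rw [Polynomial.degree_eq_natDegree (hmon β).ne_zero,
              Polynomial.degree_eq_natDegree (hmon α).ne_zero, hdeg, hdeg]
          calc ((∏ a, (X - C (β a))) - (∏ a, (X - C (α a)))).degree
              < (∏ a, (X - C (β a))).degree := by
                exact degree_sub_lt hd (hmon β).ne_zero
                  (by rw [(hmon β).leadingCoeff, (hmon α).leadingCoeff])
            _ = (N : WithBot ℕ) := by
                rw [Polynomial.degree_eq_natDegree (hmon β).ne_zero, hdeg]
        have hS : (∑ k, C (c k) * ∏ a ∈ Finset.univ.erase k, (X - C (α a))).natDegree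
            ≤ N - 1 := by
          refine natDegree_sum_le_of_forall_le _ _ fun k _ => ?_
          refine (natDegree_C_mul_le _ _).trans ?_
          refine (natDegree_prod_le _ _).trans ?_
          have : ∀ a ∈ Finset.univ.erase k, (X - C (α a)).natDegree = 1 :=
            fun a _ => natDegree_X_sub_C _
          rw [Finset.sum_congr rfl this]
          simp [Finset.card_erase_of_mem]
        calc p.natDegree ≤ max ((∏ a, (X - C (β a))) - (∏ a, (X - C (α a)))).natDegree
              (∑ k, C (c k) * ∏ a ∈ Finset.univ.erase k, (X - C (α a))).natDegree :=
            natDegree_sub_le _ _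
          _ < N := max_lt hAB (lt_of_le_of_lt hS (by omega))
      exact Polynomial.eq_zero_of_natDegree_lt_card_of_eval_eq_zero p hα heval
        (by simpa using hcard)
    have := congrArg (Polynomial.eval T) hp
    simp only [eval_sub, eval_prod, eval_finset_sum, eval_mul, eval_C, eval_X, eval_zero] at this
    linear_combination this
  rw [key, add_div, div_self hprodα, Finset.sum_div]
  congr 1
  refine Finset.sum_congr rfl fun k _ => ?_
  rw [← Finset.mul_prod_erase Finset.univ _ (mem_univ k),
    mul_div_mul_right _ _ (prod_ne_zero_iff.mpr fun a ha => hT a), div_div]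
open Finset in
lemma pf_const (N : ℕ) (α β : Fin N → ℂ) (hα : Function.Injective α)
    (h0 : ∀ a, α a ≠ 0) (T : ℂ) (hT : ∀ a, T - α a ≠ 0) :
    (∏ a, (T - β a)) / (∏ a, (T - α a)) -
      ∑ k, ((∏ a, (α k - β a)) / (∏ a ∈ Finset.univ.erase k, (α k - α a))) *
        ((T + α k) / (2 * α k * (T - α k))) =
    1 - ∑ k, ((∏ a, (α k - β a)) / (∏ a ∈ Finset.univ.erase k, (α k - α a))) / (2 * α k) := by
  have hden : ∀ k : Fin N, (∏ a ∈ Finset.univ.erase k, (α k - α a)) ≠ 0 := by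
    intro k
    refine prod_ne_zero_iff.mpr fun a ha => sub_ne_zero.mpr ?_
    exact fun h => (Finset.mem_erase.mp ha).1 (hα h.symm) |>.elim
  rw [pf_key N α β hα T hT]
  have : ∀ k : Fin N,
      ((∏ a, (α k - β a)) / (∏ a ∈ Finset.univ.erase k, (α k - α a))) *
        ((T + α k) / (2 * α k * (T - α k))) =
      ((∏ a, (α k - β a)) / (∏ a ∈ Finset.univ.erase k, (α k - α a))) / (T - α k) +
      ((∏ a, (α k - β a)) / (∏ a ∈ Finset.univ.erase k, (α k - α a))) / (2 * α k) := by
    intro k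
    have gen : ∀ q a t : ℂ, a ≠ 0 → t - a ≠ 0 →
        q * ((t + a) / (2 * a * (t - a))) = q / (t - a) + q / (2 * a) := by
      intro q a t ha hta
      field_simp
      ring
    exact gen _ _ _ (h0 k) (hT k)
  rw [Finset.sum_congr rfl fun k _ => this k, Finset.sum_add_distrib]
  ring
open Finset in
lemma sinh_pf_const (N : ℕ) (lam z : Fin N → ℂ)
    (hgen1 : ∀ a b, a ≠ b → Complex.sinh (lam a - lam b) ≠ 0)
    (x : ℂ) (hx : ∀ a, Complex.sinh (x - lam a) ≠ 0) :
    (∏ a, Complex.sinh (x - z a)) / (∏ a, Complex.sinh (x - lam a)) -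
      ∑ k, ((∏ a, Complex.sinh (lam k - z a)) /
          (∏ a ∈ Finset.univ.erase k, Complex.sinh (lam k - lam a))) *
        (Complex.cosh (x - lam k) / Complex.sinh (x - lam k)) =
    (∏ a, Complex.exp (lam a - z a)) *
      (1 - ∑ k, ((∏ a, (Complex.exp (2*lam k) - Complex.exp (2*z a))) /
          (∏ a ∈ Finset.univ.erase k, (Complex.exp (2*lam k) - Complex.exp (2*lam a)))) /
        (2 * Complex.exp (2*lam k))) := by
  classical
  have hsinh : ∀ u v : ℂ, Complex.sinh (u - v) =
      Complex.exp (-(u+v)) * (Complex.exp (2*u) - Complex.exp (2*v)) / 2 := by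
    intro u v
    have h1 : Complex.exp (u - v) = Complex.exp (-(u+v)) * Complex.exp (2*u) := by
      rw [← Complex.exp_add]; congr 1; ring
    have h2 : Complex.exp (-(u - v)) = Complex.exp (-(u+v)) * Complex.exp (2*v) := by
      rw [← Complex.exp_add]; congr 1; ring
    rw [Complex.sinh, h1, h2]
    ring
  have hcosh : ∀ u v : ℂ, Complex.cosh (u - v) =
      Complex.exp (-(u+v)) * (Complex.exp (2*u) + Complex.exp (2*v)) / 2 := by
    intro u v
    have h1 : Complex.exp (u - v) = Complex.exp (-(u+v)) * Complex.exp (2*u) := by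
      rw [← Complex.exp_add]; congr 1; ring
    have h2 : Complex.exp (-(u - v)) = Complex.exp (-(u+v)) * Complex.exp (2*v) := by
      rw [← Complex.exp_add]; congr 1; ring
    rw [Complex.cosh, h1, h2]
    ring
  set T : ℂ := Complex.exp (2*x) with hTdef
  set α : Fin N → ℂ := fun a => Complex.exp (2*lam a) with hαdef
  set β : Fin N → ℂ := fun a => Complex.exp (2*z a) with hβdef
  set E : ℂ := ∏ a, Complex.exp (lam a - z a) with hEdef
  have hsxl : ∀ a, Complex.sinh (x - lam a) =
      Complex.exp (-(x+lam a)) * (T - α a) / 2 := fun a => hsinh x (lam a)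
  have hsxz : ∀ a, Complex.sinh (x - z a) =
      Complex.exp (-(x+z a)) * (T - β a) / 2 := fun a => hsinh x (z a)
  have hcxl : ∀ a, Complex.cosh (x - lam a) =
      Complex.exp (-(x+lam a)) * (T + α a) / 2 := fun a => hcosh x (lam a)
  have hsll : ∀ k a, Complex.sinh (lam k - lam a) =
      Complex.exp (-(lam k+lam a)) * (α k - α a) / 2 := fun k a => hsinh (lam k) (lam a)
  have hslz : ∀ k a, Complex.sinh (lam k - z a) =
      Complex.exp (-(lam k+z a)) * (α k - β a) / 2 := fun k a => hsinh (lam k) (z a)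
  have hα : Function.Injective α := by
    intro a b hab
    by_contra hne
    apply hgen1 a b hne
    rw [hsll, hab]
    simp
  have h0 : ∀ a, α a ≠ 0 := fun a => Complex.exp_ne_zero _
  have hT : ∀ a, T - α a ≠ 0 := by
    intro a h
    apply hx a
    rw [hsxl, h]
    simp
  have hQ2 : ∀ k : Fin N, (∏ a ∈ Finset.univ.erase k, (α k - α a)) ≠ 0 := by
    intro k
    refine prod_ne_zero_iff.mpr fun a ha => sub_ne_zero.mpr ?_
    exact fun h => (Finset.mem_erase.mp ha).1 (hα h.symm) |>.elim
  -- first term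
  have term1 : (∏ a, Complex.sinh (x - z a)) / (∏ a, Complex.sinh (x - lam a)) =
      E * ((∏ a, (T - β a)) / (∏ a, (T - α a))) := by
    rw [← Finset.prod_div_distrib, hEdef, ← Finset.prod_div_distrib, ← Finset.prod_mul_distrib]
    refine Finset.prod_congr rfl fun a _ => ?_
    rw [hsxz, hsxl]
    have gen : ∀ p q r s : ℂ, r ≠ 0 → s ≠ 0 → (p*q/2)/(r*s/2) = (p/r)*(q/s) := by
      intro p q r s hr hs; field_simp
    rw [gen _ _ _ _ (Complex.exp_ne_zero _) (hT a), ← Complex.exp_sub,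
      show (-(x + z a)) - (-(x + lam a)) = lam a - z a by ring]
  -- coth conversion
  have hcoth : ∀ k, Complex.cosh (x - lam k) / Complex.sinh (x - lam k) =
      (T + α k) / (T - α k) := by
    intro k
    rw [hsxl, hcxl]
    have gen : ∀ e p q : ℂ, e ≠ 0 → (e*p/2)/(e*q/2) = p/q := by
      intro e p q he
      rw [mul_div_right_comm e p 2, mul_div_right_comm e q 2]
      exact mul_div_mul_left _ _ (div_ne_zero he two_ne_zero)
    exact gen _ _ _ (Complex.exp_ne_zero _)
  -- B_k conversion
  have termB : ∀ k : Fin N,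
      ((∏ a, Complex.sinh (lam k - z a)) /
          (∏ a ∈ Finset.univ.erase k, Complex.sinh (lam k - lam a))) *
        (Complex.cosh (x - lam k) / Complex.sinh (x - lam k)) =
      E * (((∏ a, (α k - β a)) / (∏ a ∈ Finset.univ.erase k, (α k - α a))) *
        ((T + α k) / (2 * α k * (T - α k)))) := by
    intro k
    have hnum : (∏ a, Complex.sinh (lam k - z a)) =
        (∏ a, Complex.exp (-(lam k + z a))) * (∏ a, (α k - β a)) / 2^N := by
      rw [Finset.prod_congr rfl (fun a _ => hslz k a),
        Finset.prod_div_distrib, Finset.prod_mul_distrib, Finset.prod_const]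
      simp
    have hden : (∏ a ∈ Finset.univ.erase k, Complex.sinh (lam k - lam a)) =
        (∏ a ∈ Finset.univ.erase k, Complex.exp (-(lam k + lam a))) *
          (∏ a ∈ Finset.univ.erase k, (α k - α a)) / 2^(N-1) := by
      rw [Finset.prod_congr rfl (fun a _ => hsll k a),
        Finset.prod_div_distrib, Finset.prod_mul_distrib, Finset.prod_const]
      rw [Finset.card_erase_of_mem (mem_univ k)]
      simp
    have hP : (∏ a ∈ Finset.univ.erase k, Complex.exp (-(lam k + lam a))) *
        Complex.exp (-(lam k + lam k)) = ∏ a, Complex.exp (-(lam k + lam a)) :=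
      Finset.prod_erase_mul _ _ (mem_univ k)
    have hE2 : (∏ a, Complex.exp (-(lam k + z a))) =
        E * (∏ a, Complex.exp (-(lam k + lam a))) := by
      rw [hEdef, ← Finset.prod_mul_distrib]
      refine Finset.prod_congr rfl fun a _ => ?_
      rw [← Complex.exp_add]
      congr 1
      ring
    have hak : Complex.exp (-(lam k + lam k)) * α k = 1 := by
      rw [show α k = Complex.exp (2*lam k) from rfl, ← Complex.exp_add,
        show -(lam k + lam k) + 2*lam k = 0 by ring, Complex.exp_zero]
    have h2 : (2:ℂ)^N = 2^(N-1) * 2 := by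
      rw [← pow_succ]
      congr 1
      have : 1 ≤ N := Nat.one_le_iff_ne_zero.mpr (by rintro rfl; exact k.elim0)
      omega
    rw [hnum, hden, hcoth k, hE2, h2, ← hP]
    have gen2 : ∀ (Ev P2 e0 Q1 Q2 t a c : ℂ), P2 ≠ 0 → Q2 ≠ 0 → t - a ≠ 0 → a ≠ 0 →
        c ≠ 0 → e0 * a = 1 →
        (Ev * (P2 * e0) * Q1 / (c * 2)) / (P2 * Q2 / c) * ((t + a) / (t - a)) =
          Ev * ((Q1 / Q2) * ((t + a) / (2 * a * (t - a)))) := by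
      intro Ev P2 e0 Q1 Q2 t a c hP2 hQ2' hta ha hc h1
      have he0 : e0 = a⁻¹ := by
        have := congrArg (· * a⁻¹) h1
        simpa [mul_assoc, mul_inv_cancel₀ ha] using this
      subst he0
      have h3 : (Ev * (P2 * a⁻¹) * Q1 / (c * 2)) / (P2 * Q2 / c) = Ev * Q1 / (Q2 * 2 * a) := by
        field_simp
      rw [h3, div_mul_div_comm, div_mul_div_comm, ← mul_div_assoc]
      ring_nf
    exact gen2 E _ _ _ _ T (α k) (2^(N-1))
      (prod_ne_zero_iff.mpr fun a _ => Complex.exp_ne_zero _) (hQ2 k) (hT k) (h0 k)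
      (pow_ne_zero _ two_ne_zero) hak
  -- assemble
  rw [term1, Finset.sum_congr rfl fun k _ => termB k, ← Finset.mul_sum, ← mul_sub,
    pf_const N α β hα h0 T hT]
open Finset in
lemma residue_id (N : ℕ) (lam z : Fin N → ℂ) (κ : ℂ) (ζ : ℝ)
    (hgen1 : ∀ a b, a ≠ b → Complex.sinh (lam a - lam b) ≠ 0)
    (μ ν : ℂ)
    (hμ : ∀ a, Complex.sinh (μ - lam a + Complex.I * ζ) ≠ 0 ∧
        Complex.sinh (μ - lam a - Complex.I * ζ) ≠ 0)
    (hν : ∀ a, Complex.sinh (ν - lam a + Complex.I * ζ) ≠ 0 ∧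
        Complex.sinh (ν - lam a - Complex.I * ζ) ≠ 0) :
    ((∏ a, Complex.sinh (μ - z a + Complex.I * ζ)) /
        (∏ a, Complex.sinh (μ - lam a + Complex.I * ζ)) -
      κ * ((∏ a, Complex.sinh (μ - z a - Complex.I * ζ)) /
        (∏ a, Complex.sinh (μ - lam a - Complex.I * ζ)))) -
      ∑ k, ((∏ a, Complex.sinh (lam k - z a)) /
          (∏ a ∈ Finset.univ.erase k, Complex.sinh (lam k - lam a))) *
        (Complex.cosh (μ - lam k + Complex.I * ζ) / Complex.sinh (μ - lam k + Complex.I * ζ) -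
          κ * (Complex.cosh (μ - lam k - Complex.I * ζ) /
            Complex.sinh (μ - lam k - Complex.I * ζ))) =
    ((∏ a, Complex.sinh (ν - z a + Complex.I * ζ)) /
        (∏ a, Complex.sinh (ν - lam a + Complex.I * ζ)) -
      κ * ((∏ a, Complex.sinh (ν - z a - Complex.I * ζ)) /
        (∏ a, Complex.sinh (ν - lam a - Complex.I * ζ)))) -
      ∑ k, ((∏ a, Complex.sinh (lam k - z a)) /
          (∏ a ∈ Finset.univ.erase k, Complex.sinh (lam k - lam a))) *
        (Complex.cosh (ν - lam k + Complex.I * ζ) / Complex.sinh (ν - lam k + Complex.I * ζ) -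
          κ * (Complex.cosh (ν - lam k - Complex.I * ζ) /
            Complex.sinh (ν - lam k - Complex.I * ζ))) := by
  have harg1 : ∀ w v : ℂ, w - v + Complex.I * (ζ:ℂ) = (w + Complex.I * ζ) - v :=
    fun w v => by ring
  have harg2 : ∀ w v : ℂ, w - v - Complex.I * (ζ:ℂ) = (w - Complex.I * ζ) - v :=
    fun w v => by ring
  simp only [harg1, harg2]
  have h1 := sinh_pf_const N lam z hgen1 (μ + Complex.I * ζ)
    (fun a => by rw [← harg1]; exact (hμ a).1)
  have h2 := sinh_pf_const N lam z hgen1 (ν + Complex.I * ζ)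
    (fun a => by rw [← harg1]; exact (hν a).1)
  have h3 := sinh_pf_const N lam z hgen1 (μ - Complex.I * ζ)
    (fun a => by rw [← harg2]; exact (hμ a).2)
  have h4 := sinh_pf_const N lam z hgen1 (ν - Complex.I * ζ)
    (fun a => by rw [← harg2]; exact (hν a).2)
  have hsplit : ∀ (w : ℂ),
      ∑ k, ((∏ a, Complex.sinh (lam k - z a)) /
          (∏ a ∈ Finset.univ.erase k, Complex.sinh (lam k - lam a))) *
        (Complex.cosh ((w + Complex.I * ζ) - lam k) / Complex.sinh ((w + Complex.I * ζ) - lam k) -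
          κ * (Complex.cosh ((w - Complex.I * ζ) - lam k) /
            Complex.sinh ((w - Complex.I * ζ) - lam k))) =
      (∑ k, ((∏ a, Complex.sinh (lam k - z a)) /
          (∏ a ∈ Finset.univ.erase k, Complex.sinh (lam k - lam a))) *
        (Complex.cosh ((w + Complex.I * ζ) - lam k) / Complex.sinh ((w + Complex.I * ζ) - lam k))) -
      κ * ∑ k, ((∏ a, Complex.sinh (lam k - z a)) /
          (∏ a ∈ Finset.univ.erase k, Complex.sinh (lam k - lam a))) *
        (Complex.cosh ((w - Complex.I * ζ) - lam k) / Complex.sinh ((w - Complex.I * ζ) - lam k)) := by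
    intro w
    rw [Finset.mul_sum, ← Finset.sum_sub_distrib]
    exact Finset.sum_congr rfl fun k _ => by ring
  rw [hsplit μ, hsplit ν]
  linear_combination h1 - h2 - κ * (h3 - h4)
/-- θ-independence of the normalized determinant
`det[δ + U(θ)] / (V₊(θ)⁻¹ − κ V₋(θ)⁻¹)`. -/
theorem theta_independence_normalized_det (N : ℕ) (lam z : Fin N → ℂ)
    (κ : ℂ) (ζ : ℝ) (hζ : 0 < ζ ∧ ζ < Real.pi) (θ θ' : ℂ)
    (Vp Vm Kk : ℂ → ℂ)
    (hVp : ∀ μ, Vp μ = ∏ a, Complex.sinh (μ - lam a + Complex.I * ζ) /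
        Complex.sinh (μ - z a + Complex.I * ζ))
    (hVm : ∀ μ, Vm μ = ∏ a, Complex.sinh (μ - lam a - Complex.I * ζ) /
        Complex.sinh (μ - z a - Complex.I * ζ))
    (hKk : ∀ w, Kk w = Complex.cosh (w + Complex.I * ζ) /
          Complex.sinh (w + Complex.I * ζ) -
        κ * (Complex.cosh (w - Complex.I * ζ) / Complex.sinh (w - Complex.I * ζ)))
    (U : ℂ → Matrix (Fin N) (Fin N) ℂ)
    (hU : ∀ t j k, U t j k =
      ((∏ a, Complex.sinh (z a - lam j)) /
          ∏ a ∈ Finset.univ.erase j, Complex.sinh (lam a - lam j)) *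
        ((Kk (lam j - lam k) - Kk (t - lam k)) /
          ((Vp (lam j))⁻¹ - κ * (Vm (lam j))⁻¹)))
    (hgen1 : ∀ a b, a ≠ b → Complex.sinh (lam a - lam b) ≠ 0)
    (hgen2 : ∀ a j, Complex.sinh (z a - lam j) ≠ 0)
    (hgen3 : ∀ j, (Vp (lam j))⁻¹ - κ * (Vm (lam j))⁻¹ ≠ 0)
    (hgen4 : (Vp θ)⁻¹ - κ * (Vm θ)⁻¹ ≠ 0)
    (hgen5 : (Vp θ')⁻¹ - κ * (Vm θ')⁻¹ ≠ 0)
    (hgen6 : ∀ j, Vp (lam j) ≠ 0 ∧ Vm (lam j) ≠ 0)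
    (hgen7 : Vp θ ≠ 0 ∧ Vm θ ≠ 0) (hgen8 : Vp θ' ≠ 0 ∧ Vm θ' ≠ 0)
    (hK1 : ∀ j k, Complex.sinh (lam j - lam k + Complex.I * ζ) ≠ 0 ∧
        Complex.sinh (lam j - lam k - Complex.I * ζ) ≠ 0)
    (hK2 : ∀ k, Complex.sinh (θ - lam k + Complex.I * ζ) ≠ 0 ∧
        Complex.sinh (θ - lam k - Complex.I * ζ) ≠ 0)
    (hK3 : ∀ k, Complex.sinh (θ' - lam k + Complex.I * ζ) ≠ 0 ∧
        Complex.sinh (θ' - lam k - Complex.I * ζ) ≠ 0) :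
    (1 + U θ).det =
      (((Vp θ)⁻¹ - κ * (Vm θ)⁻¹) / ((Vp θ')⁻¹ - κ * (Vm θ')⁻¹)) *
        (1 + U θ').det := by
  classical
  have hVpinv : ∀ μ, (Vp μ)⁻¹ =
      (∏ a, Complex.sinh (μ - z a + Complex.I * ζ)) /
        (∏ a, Complex.sinh (μ - lam a + Complex.I * ζ)) := by
    intro μ
    rw [hVp, Finset.prod_div_distrib, inv_div]
  have hVminv : ∀ μ, (Vm μ)⁻¹ =
      (∏ a, Complex.sinh (μ - z a - Complex.I * ζ)) /
        (∏ a, Complex.sinh (μ - lam a - Complex.I * ζ)) := by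
    intro μ
    rw [hVm, Finset.prod_div_distrib, inv_div]
  cases N with
  | zero =>
      have h1 : (Vp θ)⁻¹ - κ * (Vm θ)⁻¹ = 1 - κ := by
        rw [hVpinv, hVminv]; simp
      have h2 : (Vp θ')⁻¹ - κ * (Vm θ')⁻¹ = 1 - κ := by
        rw [hVpinv, hVminv]; simp
      rw [Matrix.det_isEmpty, Matrix.det_isEmpty, h1, h2,
        div_self (h2 ▸ hgen5), one_mul]
  | succ n =>
      set ℓ : Fin (n+1) := Fin.last n with hℓ
      set B : Fin (n+1) → ℂ := fun k => (∏ a, Complex.sinh (lam k - z a)) /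
        (∏ a ∈ Finset.univ.erase k, Complex.sinh (lam k - lam a)) with hB
      set u : Fin (n+1) → ℂ := fun j => B j / ((Vp (lam j))⁻¹ - κ * (Vm (lam j))⁻¹) with hu
      have hBnum : ∀ k, (∏ a, Complex.sinh (lam k - z a)) ≠ 0 := by
        intro k
        refine Finset.prod_ne_zero_iff.mpr fun a _ => ?_
        rw [show lam k - z a = -(z a - lam k) by ring, Complex.sinh_neg]
        exact neg_ne_zero.mpr (hgen2 a k)
      have hBden : ∀ k, (∏ a ∈ Finset.univ.erase k, Complex.sinh (lam k - lam a)) ≠ 0 := by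
        intro k
        refine Finset.prod_ne_zero_iff.mpr fun a ha => ?_
        exact hgen1 k a fun h => (Finset.mem_erase.mp ha).1 h.symm
      have hBne : ∀ k, B k ≠ 0 := fun k => div_ne_zero (hBnum k) (hBden k)
      -- the prefactor in U is -B j
      have hP : ∀ j, ((∏ a, Complex.sinh (z a - lam j)) /
          ∏ a ∈ Finset.univ.erase j, Complex.sinh (lam a - lam j)) = -B j := by
        intro j
        have hnum : (∏ a, Complex.sinh (z a - lam j)) =
            (-1)^(n+1) * ∏ a, Complex.sinh (lam j - z a) := by
          rw [Finset.prod_congr rfl (fun a _ => show Complex.sinh (z a - lam j) =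
              (-1) * Complex.sinh (lam j - z a) by
            rw [show z a - lam j = -(lam j - z a) by ring, Complex.sinh_neg]; ring),
            Finset.prod_mul_distrib, Finset.prod_const]
          simp
        have hden : (∏ a ∈ Finset.univ.erase j, Complex.sinh (lam a - lam j)) =
            (-1)^n * ∏ a ∈ Finset.univ.erase j, Complex.sinh (lam j - lam a) := by
          rw [Finset.prod_congr rfl (fun a _ => show Complex.sinh (lam a - lam j) =
              (-1) * Complex.sinh (lam j - lam a) by
            rw [show lam a - lam j = -(lam j - lam a) by ring, Complex.sinh_neg]; ring),
            Finset.prod_mul_distrib, Finset.prod_const,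
            Finset.card_erase_of_mem (Finset.mem_univ j)]
          simp
        rw [hnum, hden, hB]
        rw [show ((-1:ℂ))^(n+1) * (∏ a, Complex.sinh (lam j - z a)) =
            (-1)^n * (-(∏ a, Complex.sinh (lam j - z a))) by rw [pow_succ]; ring]
        rw [mul_div_mul_left _ _ (pow_ne_zero n (neg_ne_zero.mpr one_ne_zero)), neg_div]
      -- residue identity
      have hres : ∀ μ ν,
          (∀ a, Complex.sinh (μ - lam a + Complex.I * ζ) ≠ 0 ∧
            Complex.sinh (μ - lam a - Complex.I * ζ) ≠ 0) →
          (∀ a, Complex.sinh (ν - lam a + Complex.I * ζ) ≠ 0 ∧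
            Complex.sinh (ν - lam a - Complex.I * ζ) ≠ 0) →
          ((Vp μ)⁻¹ - κ * (Vm μ)⁻¹) - ∑ k, B k * Kk (μ - lam k) =
          ((Vp ν)⁻¹ - κ * (Vm ν)⁻¹) - ∑ k, B k * Kk (ν - lam k) := by
        intro μ ν hμ hν
        rw [hVpinv, hVminv, hVpinv, hVminv]
        simp only [hB, hKk]
        exact residue_id (n+1) lam z κ ζ hgen1 μ ν hμ hν
      -- eigenvector relation
      have hmul : ∀ t, (∀ k, Complex.sinh (t - lam k + Complex.I * ζ) ≠ 0 ∧
          Complex.sinh (t - lam k - Complex.I * ζ) ≠ 0) →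
          ∀ j, ∑ k, (1 + U t) j k * B k = ((Vp t)⁻¹ - κ * (Vm t)⁻¹) * u j := by
        intro t ht j
        have e1 : ∀ k, (1 + U t) j k =
            (if j = k then 1 else 0) + U t j k := by
          intro k
          simp [Matrix.add_apply, Matrix.one_apply]
        have e2 : ∑ k, (1 + U t) j k * B k = B j + ∑ k, U t j k * B k := by
          rw [Finset.sum_congr rfl fun k _ => by rw [e1 k, add_mul],
            Finset.sum_add_distrib]
          congr 1
          simp
        have e3 : ∑ k, (Kk (lam j - lam k) - Kk (t - lam k)) * B k =
            ((Vp (lam j))⁻¹ - κ * (Vm (lam j))⁻¹) - ((Vp t)⁻¹ - κ * (Vm t)⁻¹) := by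
          have h := hres (lam j) t (fun a => hK1 j a) ht
          have h2 : ∑ k, (Kk (lam j - lam k) - Kk (t - lam k)) * B k =
              (∑ k, B k * Kk (lam j - lam k)) - ∑ k, B k * Kk (t - lam k) := by
            rw [← Finset.sum_sub_distrib]
            exact Finset.sum_congr rfl fun k _ => by ring
          rw [h2]
          linear_combination -h
        have e4 : ∑ k, U t j k * B k =
            (-B j / ((Vp (lam j))⁻¹ - κ * (Vm (lam j))⁻¹)) *
              ∑ k, (Kk (lam j - lam k) - Kk (t - lam k)) * B k := by
          rw [Finset.mul_sum]
          refine Finset.sum_congr rfl fun k _ => ?_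
          rw [hU, hP j]
          ring
        rw [e2, e4, e3]
        have huj : u j = B j / ((Vp (lam j))⁻¹ - κ * (Vm (lam j))⁻¹) := rfl
        rw [huj]
        have gen : ∀ (b S T : ℂ), S ≠ 0 → b + -b / S * (S - T) = T * (b / S) := by
          intro b S T hS
          field_simp
          ring
        exact gen (B j) _ _ (hgen3 j)
      -- cramer consequence
      have hmv : ∀ t, (∀ k, Complex.sinh (t - lam k + Complex.I * ζ) ≠ 0 ∧
          Complex.sinh (t - lam k - Complex.I * ζ) ≠ 0) →
          (1 + U t) *ᵥ B = ((Vp t)⁻¹ - κ * (Vm t)⁻¹) • u := by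
        intro t ht
        funext j
        rw [Pi.smul_apply, smul_eq_mul]
        rw [show ((1 + U t) *ᵥ B) j = ∑ k, (1 + U t) j k * B k from rfl]
        exact hmul t ht j
      have step1 : ∀ t, (∀ k, Complex.sinh (t - lam k + Complex.I * ζ) ≠ 0 ∧
          Complex.sinh (t - lam k - Complex.I * ζ) ≠ 0) →
          (1 + U t).det * B ℓ =
            ((Vp t)⁻¹ - κ * (Vm t)⁻¹) * ((1 + U t).updateCol ℓ u).det := by
        intro t ht
        have hcr : Matrix.cramer (1 + U t) ((1 + U t) *ᵥ B) = (1 + U t).det • B := by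
          rw [Matrix.cramer_eq_adjugate_mulVec, Matrix.mulVec_mulVec,
            Matrix.adjugate_mul, Matrix.smul_mulVec, Matrix.one_mulVec]
        have h1 : (1 + U t).det * B ℓ =
            Matrix.cramer (1 + U t) ((1 + U t) *ᵥ B) ℓ := by
          rw [hcr, Pi.smul_apply, smul_eq_mul]
        rw [h1, hmv t ht, Matrix.cramer_apply, Matrix.det_updateCol_smul]
      -- column operations: the θ-dependent part lies in span of column ℓ
      have step2 : ((1 + U θ).updateCol ℓ u).det =
          ((1 + U θ').updateCol ℓ u).det := by
        rw [← Matrix.det_transpose, ← Matrix.det_transpose (((1 + U θ')).updateCol ℓ u)]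
        apply Matrix.det_eq_of_forall_row_eq_smul_add_const
          (fun i => if i = ℓ then 0 else Kk (θ - lam i) - Kk (θ' - lam i)) ℓ (if_pos rfl)
        intro i j
        simp only [Matrix.transpose_apply, Matrix.updateCol_apply, if_pos rfl]
        by_cases hi : i = ℓ
        · simp [hi]
        · simp only [if_neg hi]
          have hadd : ∀ t : ℂ, (1 + U t) j i = (if j = i then 1 else 0) + U t j i := by
            intro t
            simp [Matrix.add_apply, Matrix.one_apply]
          rw [hadd, hadd, hU, hU, hP j]
          have huj : u j = B j / ((Vp (lam j))⁻¹ - κ * (Vm (lam j))⁻¹) := rfl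
          rw [huj]
          have gen : ∀ (d b S K1 K2 K3 : ℂ), S ≠ 0 →
              d + -b * ((K1 - K2) / S) = d + -b * ((K1 - K3) / S) + (K2 - K3) * (b / S) := by
            intro d b S K1 K2 K3 hS
            field_simp
            ring
          exact gen _ _ _ _ _ _ (hgen3 j)
      -- combine
      have h1 := step1 θ hK2
      have h2 := step1 θ' hK3
      apply mul_right_cancel₀ (mul_ne_zero (hBne ℓ) hgen5)
      linear_combination ((Vp θ')⁻¹ - κ * (Vm θ')⁻¹) * h1 -
        (((Vp θ)⁻¹ - κ * (Vm θ)⁻¹) / ((Vp θ')⁻¹ - κ * (Vm θ')⁻¹)) *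
          ((Vp θ')⁻¹ - κ * (Vm θ')⁻¹) * h2 -
        ((1 + U θ').updateCol ℓ u).det * ((Vp θ')⁻¹ - κ * (Vm θ')⁻¹) *
          (div_mul_cancel₀ ((Vp θ)⁻¹ - κ * (Vm θ)⁻¹) hgen5) +
        ((Vp θ)⁻¹ - κ * (Vm θ)⁻¹) * ((Vp θ')⁻¹ - κ * (Vm θ')⁻¹) * step2
end

section
/- Ratio of hyperbolic Cauchy determinants at doubled argument: for complex numbers λ₁,…,λ_N, z₁,…,z_N such that sinh(z_k−λ_j) ≠ 0 and cosh(z_k−λ_j) ≠ 0 for all j,k, the λ's pairwise distinct mod iπ/2 and the z's pairwise distinct mod iπ/2, one has det_N[1/sinh(2(z_k−λ_j))] / det_N[1/sinh(z_k−λ_j)] = 2^{−N} · ∏_{a>b} cosh(z_a−z_b)·cosh(λ_a−λ_b) / ∏_{a,b} cosh(z_a−λ_b). -/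
/-!
After scaling rows and columns by exponentials, `1 / sinh (z - λ)` becomes the Cauchy kernel
`1 / (e^{2z} - e^{2λ})`, so the Cauchy determinant formula evaluates both determinants as
quotients of products of `sinh`. Writing `sinh (2x) = 2 sinh x cosh x` in the doubled one, the
`sinh`-products cancel in the ratio and only the `cosh`-factors and a power of `2` survive.
-/

open Matrix Finset

theorem Fin.prod_mul_prod_Iio_mul_eq_pow {M : Type*} [CommMonoid M] :
    ∀ {n : ℕ} (g : Fin n → M),
      (∏ a, g a) * ∏ a, ∏ b ∈ Iio a, g a * g b = (∏ a, g a) ^ n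
  | 0, _ => by simp
  | n + 1, g => by
    have ih := Fin.prod_mul_prod_Iio_mul_eq_pow (fun i : Fin n => g i.castSucc)
    simp only [Fin.prod_univ_castSucc, Fin.Iio_castSucc, Fin.Iio_last_eq_map, prod_map,
      Fin.coe_castSuccEmb, prod_mul_distrib, prod_const] at ih ⊢
    rw [pow_succ, mul_pow, ← ih]
    ac_rfl

theorem Matrix.det_eq_mul_det_submatrix_castSucc {R : Type*} [CommRing R] {n : ℕ}
    (A : Matrix (Fin (n + 1)) (Fin (n + 1)) R)
    (h : ∀ i, i ≠ Fin.last n → A i (Fin.last n) = 0) :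
    A.det = A (Fin.last n) (Fin.last n) * (A.submatrix Fin.castSucc Fin.castSucc).det := by
  rw [det_succ_column _ (Fin.last n), sum_eq_single (Fin.last n) (fun i _ hi => by simp [h i hi])
    (by simp), Fin.succAbove_last, ← two_mul, pow_mul]
  simp

theorem Matrix.det_mul_row_mul_column {R ι : Type*} [CommRing R] [Fintype ι] [DecidableEq ι]
    (f g : ι → R) (A : Matrix ι ι R) :
    (of fun i j => f j * (g i * A i j)).det = (∏ i, f i) * ((∏ i, g i) * A.det) := by
  rw [← det_mul_column, ← det_mul_row]
  rfl

section Cauchy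

variable {K : Type*} [Field K]

def cauchyMatrix {ι : Type*} (u v : ι → K) : Matrix ι ι K :=
  of fun i k => (v k - u i)⁻¹

theorem det_cauchyMatrix_succ {n : ℕ} (u v : Fin (n + 1) → K) (h : ∀ i k, v k ≠ u i) :
    (cauchyMatrix u v).det = (v (Fin.last n) - u (Fin.last n))⁻¹ *
      ((∏ k : Fin n, (v (Fin.last n) - v k.castSucc) / (v k.castSucc - u (Fin.last n))) *
        (∏ i : Fin n, (u i.castSucc - u (Fin.last n)) / (v (Fin.last n) - u i.castSucc)) *
          (cauchyMatrix (u ∘ Fin.castSucc) (v ∘ Fin.castSucc)).det) := by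
  set L := Fin.last n with hL
  -- Clearing the last column by row operations leaves a scaled Cauchy matrix as Schur complement.
  have h' : ∀ i k, v k - u i ≠ 0 := fun i k => sub_ne_zero.mpr (h i k)
  let c : Fin (n + 1) → K := fun i => if i = L then 0 else -(v L - u L) / (v L - u i)
  let B : Matrix (Fin (n + 1)) (Fin (n + 1)) K :=
    of fun i k => (v k - u i)⁻¹ + c i * (v k - u L)⁻¹
  have hcL : c L = 0 := if_pos rfl
  have hB : (cauchyMatrix u v).det = B.det :=
    det_eq_of_forall_row_eq_smul_add_const (fun i => -c i) L (by simp [hcL]) fun i k => by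
      simp [B, cauchyMatrix, hcL]
  have hBL : ∀ i, i ≠ L → B i L = 0 := fun i hi => by
    simp only [B, c, of_apply, if_neg hi]
    field_simp [h' i L, h' L L]
    ring
  have hsub : B.submatrix Fin.castSucc Fin.castSucc = of fun i k =>
      (v L - v k.castSucc) / (v k.castSucc - u L) *
        ((u i.castSucc - u L) / (v L - u i.castSucc) *
          cauchyMatrix (u ∘ Fin.castSucc) (v ∘ Fin.castSucc) i k) := by
    ext i k
    have hiL : i.castSucc ≠ L := (Fin.castSucc_lt_last i).ne
    simp only [B, c, cauchyMatrix, submatrix_apply, of_apply, Function.comp_apply, if_neg hiL]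
    field_simp [h' i.castSucc k.castSucc, h' i.castSucc L, h' L k.castSucc]
    ring
  rw [hB, det_eq_mul_det_submatrix_castSucc B hBL, hsub, det_mul_row_mul_column]
  simp [B, c, hL, mul_assoc]

theorem det_cauchyMatrix :
    ∀ {n : ℕ} (u v : Fin n → K), (∀ i k, v k ≠ u i) →
      (cauchyMatrix u v).det =
        (∏ a, ∏ b ∈ Iio a, (v a - v b) * (u b - u a)) / ∏ i, ∏ k, (v k - u i)
  | 0, _, _, _ => by simp
  | n + 1, u, v, h => by
    rw [det_cauchyMatrix_succ u v h,
      det_cauchyMatrix (u ∘ Fin.castSucc) (v ∘ Fin.castSucc) fun i k => h _ _]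
    simp only [Fin.prod_univ_castSucc, Fin.Iio_castSucc, Fin.Iio_last_eq_map, prod_map,
      Fin.coe_castSuccEmb, Function.comp_apply, prod_mul_distrib, div_eq_mul_inv, prod_inv_distrib,
      mul_inv]
    ring

end Cauchy

namespace Complex

theorem exp_two_mul_sub_exp_two_mul (x y : ℂ) :
    exp (2 * x) - exp (2 * y) = 2 * exp x * exp y * sinh (x - y) := by
  rw [sinh, exp_sub, neg_sub, exp_sub, two_mul, two_mul, exp_add, exp_add]
  field_simp [exp_ne_zero x, exp_ne_zero y]

theorem det_inv_sinh_sub {n : ℕ} (lam z : Fin n → ℂ) (h : ∀ j k, sinh (z k - lam j) ≠ 0) :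
    (of fun j k => (sinh (z k - lam j))⁻¹).det =
      (∏ a, ∏ b ∈ Iio a, sinh (z a - z b) * sinh (lam b - lam a)) /
        ∏ j, ∏ k, sinh (z k - lam j) := by
  set g : Fin n → ℂ := fun a => 2 * exp (z a) * exp (lam a)
  have hentry : (of fun j k => (sinh (z k - lam j))⁻¹) = of fun j k =>
      exp (z k) * (2 * exp (lam j) *
        cauchyMatrix (fun j => exp (2 * lam j)) (fun k => exp (2 * z k)) j k) := by
    ext j k
    simp only [cauchyMatrix, of_apply, exp_two_mul_sub_exp_two_mul]
    field_simp [exp_ne_zero (z k), exp_ne_zero (lam j)]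
  have hcauchy := det_cauchyMatrix (fun j => exp (2 * lam j)) (fun k => exp (2 * z k))
    fun j k => sub_ne_zero.mp <| by
      rw [exp_two_mul_sub_exp_two_mul]
      exact mul_ne_zero (by simp [exp_ne_zero]) (h j k)
  have hnum : ∏ a, ∏ b ∈ Iio a,
        (exp (2 * z a) - exp (2 * z b)) * (exp (2 * lam b) - exp (2 * lam a)) =
      (∏ a, ∏ b ∈ Iio a, g a * g b) *
        ∏ a, ∏ b ∈ Iio a, sinh (z a - z b) * sinh (lam b - lam a) := by
    simp only [← prod_mul_distrib, exp_two_mul_sub_exp_two_mul, g]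
    exact prod_congr rfl fun a _ => prod_congr rfl fun b _ => by ring
  have hden : ∏ j, ∏ k, (exp (2 * z k) - exp (2 * lam j)) =
      (∏ a, g a) ^ n * ∏ j, ∏ k, sinh (z k - lam j) := by
    simp only [exp_two_mul_sub_exp_two_mul, prod_mul_distrib, prod_const, card_univ,
      Fintype.card_fin, prod_pow, g, mul_pow]
  have hprod : (∏ k, exp (z k)) * ∏ j, 2 * exp (lam j) = ∏ a, g a := by
    simp only [g, prod_mul_distrib]
    ring
  have hpow : (∏ a, g a) * ∏ a, ∏ b ∈ Iio a, g a * g b ≠ 0 := by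
    rw [Fin.prod_mul_prod_Iio_mul_eq_pow]
    exact pow_ne_zero _ (prod_ne_zero_iff.mpr fun a _ => by simp [g, exp_ne_zero])
  rw [hentry, det_mul_row_mul_column, hcauchy, hnum, hden, ← mul_assoc, hprod,
    ← Fin.prod_mul_prod_Iio_mul_eq_pow g]
  obtain ⟨hG, hX⟩ := mul_ne_zero_iff.mp hpow
  field_simp

theorem det_inv_sinh_two_mul_sub {n : ℕ} (lam z : Fin n → ℂ)
    (hs : ∀ j k, sinh (z k - lam j) ≠ 0) (hc : ∀ j k, cosh (z k - lam j) ≠ 0) :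
    (of fun j k => (sinh (2 * (z k - lam j)))⁻¹).det =
      (2 : ℂ)⁻¹ ^ n * ((∏ a, ∏ b ∈ Iio a, sinh (z a - z b) * sinh (lam b - lam a)) *
          ∏ a, ∏ b ∈ Iio a, cosh (z a - z b) * cosh (lam a - lam b)) /
        ((∏ j, ∏ k, sinh (z k - lam j)) * ∏ j, ∏ k, cosh (z k - lam j)) := by
  have hs2 : ∀ j k, sinh (2 * z k - 2 * lam j) ≠ 0 := fun j k => by
    rw [← mul_sub, sinh_two_mul]
    exact mul_ne_zero (mul_ne_zero two_ne_zero (hs j k)) (hc j k)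
  have hnum : ∏ a, ∏ b ∈ Iio a, 2 * sinh (z a - z b) * cosh (z a - z b) *
        (2 * sinh (lam b - lam a) * cosh (lam b - lam a)) =
      (∏ a : Fin n, ∏ _b ∈ Iio a, (2 : ℂ) * 2) *
        ((∏ a, ∏ b ∈ Iio a, sinh (z a - z b) * sinh (lam b - lam a)) *
          ∏ a, ∏ b ∈ Iio a, cosh (z a - z b) * cosh (lam a - lam b)) := by
    simp only [← prod_mul_distrib]
    refine prod_congr rfl fun a _ => prod_congr rfl fun b _ => ?_
    rw [← neg_sub (lam a), cosh_neg]
    ring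
  have hden : ∏ j, ∏ k, 2 * sinh (z k - lam j) * cosh (z k - lam j) =
      (∏ _a : Fin n, (2 : ℂ)) ^ n *
        ((∏ j, ∏ k, sinh (z k - lam j)) * ∏ j, ∏ k, cosh (z k - lam j)) := by
    simp only [prod_mul_distrib, prod_const, card_univ, Fintype.card_fin, mul_assoc]
  have hX : (∏ a : Fin n, ∏ _b ∈ Iio a, (2 : ℂ) * 2) ≠ 0 :=
    prod_ne_zero_iff.mpr fun _ _ => prod_ne_zero_iff.mpr fun _ _ => by norm_num
  simp only [mul_sub]
  rw [det_inv_sinh_sub (2 * lam ·) (2 * z ·) hs2]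
  simp only [← mul_sub, sinh_two_mul]
  rw [hnum, hden, ← Fin.prod_mul_prod_Iio_mul_eq_pow,
    show (2 : ℂ)⁻¹ ^ n = (∏ _a : Fin n, (2 : ℂ))⁻¹ by simp]
  generalize ∏ a : Fin n, ∏ _b ∈ Iio a, (2 : ℂ) * 2 = X at hX ⊢
  field_simp

end Complex

/-- Ratio of hyperbolic Cauchy determinants at doubled argument. -/
theorem ratio_cauchy_det_doubled (N : ℕ) (lam z : Fin N → ℂ)
    (hs : ∀ j k, Complex.sinh (z k - lam j) ≠ 0)
    (hc : ∀ j k, Complex.cosh (z k - lam j) ≠ 0)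
    (hlam : ∀ a b, a ≠ b →
      Complex.sinh (lam a - lam b) ≠ 0 ∧ Complex.cosh (lam a - lam b) ≠ 0)
    (hz : ∀ a b, a ≠ b →
      Complex.sinh (z a - z b) ≠ 0 ∧ Complex.cosh (z a - z b) ≠ 0) :
    Matrix.det (Matrix.of fun j k : Fin N => 1 / Complex.sinh (2 * (z k - lam j))) /
        Matrix.det (Matrix.of fun j k : Fin N => 1 / Complex.sinh (z k - lam j)) =
      (2 : ℂ)⁻¹ ^ N *
        ((∏ a : Fin N, ∏ b ∈ Finset.Iio a,
            Complex.cosh (z a - z b) * Complex.cosh (lam a - lam b)) /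
          ∏ a : Fin N, ∏ b : Fin N, Complex.cosh (z a - lam b)) := by
  have hS : (∏ a, ∏ b ∈ Iio a,
      Complex.sinh (z a - z b) * Complex.sinh (lam b - lam a)) ≠ 0 :=
    prod_ne_zero_iff.mpr fun a _ => prod_ne_zero_iff.mpr fun b hb =>
      mul_ne_zero (hz a b (mem_Iio.mp hb).ne').1 (hlam b a (mem_Iio.mp hb).ne).1
  have hD : (∏ j, ∏ k, Complex.sinh (z k - lam j)) ≠ 0 :=
    prod_ne_zero_iff.mpr fun j _ => prod_ne_zero_iff.mpr fun k _ => hs j k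
  simp only [one_div]
  rw [Complex.det_inv_sinh_two_mul_sub lam z hs hc, Complex.det_inv_sinh_sub lam z hs,
    prod_comm (f := fun a b => Complex.cosh (z a - lam b))]
  field_simp
end
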